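/- arXiv:2505.12930 — 12 statements merged into one kernel-verified Lean document; each statement's English description precedes it below -/
import Mathlib

section
/- If a matrix A ∈ ℝ^{m×n} has a forbidden pattern, then A does not have an elimination ordering. -/
open Matrix Finset
open scoped Classical

/-- `A` has a forbidden pattern: there are `lam ≥ 1` rows and columns, with
orderings (injective enumerations) `r`, `c`, such that in column `c l` all rows
of the pattern other than `r l`, `r (l+1)` vanish (cyclically), and
`A (r l) (c l) * A (r (l+1)) (c l) < 0` for every `l`. -/
def HasFP {m n : ℕ} (A : Matrix (Fin m) (Fin n) ℝ) : Prop :=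
  ∃ lam : ℕ, ∃ r : Fin (lam + 1) → Fin m, ∃ c : Fin (lam + 1) → Fin n,
    Function.Injective r ∧ Function.Injective c ∧
    (∀ l k : Fin (lam + 1), k ≠ l → k ≠ l + 1 → A (r k) (c l) = 0) ∧
    (∀ l : Fin (lam + 1), A (r l) (c l) * A (r (l + 1)) (c l) < 0)

/-- `A`, restricted to the set `S` of remaining columns, can be eliminated at column `j`. -/
def CanElim {m n : ℕ} (A : Matrix (Fin m) (Fin n) ℝ) (S : Finset (Fin n)) (j : Fin n) : Prop :=
  (∀ i, 0 < A i j → ∀ j' ∈ S, j' ≠ j → A i j' = 0) ∨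
  (∀ i, A i j < 0 → ∀ j' ∈ S, j' ≠ j → A i j' = 0)

/-- `A` has an elimination ordering. -/
def HasEO {m n : ℕ} (A : Matrix (Fin m) (Fin n) ℝ) : Prop :=
  ∃ e : Fin n ≃ Fin n, ∀ t : Fin n,
    CanElim A (Finset.univ.filter fun c => ∀ s : Fin n, s < t → e s ≠ c) (e t)

/-- `x ∈ {0,…,d}ⁿ` is a feasible solution of the integer linear system `A x ≥ b`. -/
def Feas {m n : ℕ} (d : ℕ) (A : Matrix (Fin m) (Fin n) ℝ) (b : Fin m → ℝ)
    (x : Fin n → ℕ) : Prop :=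
  (∀ j, x j ≤ d) ∧ ∀ i, b i ≤ ∑ j, A i j * (x j : ℝ)

/-- Adjacency in the solution graph `G(A,b)`: both endpoints are feasible and
their Hamming distance is `1`. -/
def SGAdj {m n : ℕ} (d : ℕ) (A : Matrix (Fin m) (Fin n) ℝ) (b : Fin m → ℝ)
    (x y : Fin n → ℕ) : Prop :=
  Feas d A b x ∧ Feas d A b y ∧ hammingDist x y = 1

/-- The solution graph `G(A,b)` is connected. -/
def SGConn {m n : ℕ} (d : ℕ) (A : Matrix (Fin m) (Fin n) ℝ) (b : Fin m → ℝ) : Prop :=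
  ∀ x y : Fin n → ℕ, Feas d A b x → Feas d A b y →
    Relation.ReflTransGen (SGAdj d A b) x y

/-- `A` is universally connected. -/
def UnivConn {m n : ℕ} (d : ℕ) (A : Matrix (Fin m) (Fin n) ℝ) : Prop :=
  ∀ b : Fin m → ℝ, SGConn d A b

theorem stmt1 {m n : ℕ} (A : Matrix (Fin m) (Fin n) ℝ) (h : HasFP A) : ¬ HasEO A := by
  rintro ⟨e, he⟩
  obtain ⟨lam, r, c, hr, hc, hzero, hsign⟩ := h
  rcases Nat.eq_zero_or_pos lam with rfl | hlam
  · have h0 := hsign 0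
    rw [show (0 : Fin 1) + 1 = 0 from rfl] at h0
    exact absurd h0 (not_lt.2 (mul_self_nonneg _))
  have hone : (1 : Fin (lam + 1)) ≠ 0 := by
    intro hh
    have := congrArg Fin.val hh
    rw [Fin.val_one', Fin.val_zero, Nat.mod_eq_of_lt (by omega)] at this
    omega
  obtain ⟨l0, -, hmin⟩ := Finset.exists_min_image Finset.univ
    (fun l => e.symm (c l)) ⟨0, Finset.mem_univ 0⟩
  set t := e.symm (c l0) with ht
  have het : e t = c l0 := e.apply_symm_apply _
  have hS : ∀ l, c l ∈ Finset.univ.filter fun col => ∀ s : Fin n, s < t → e s ≠ col := by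
    intro l
    simp only [Finset.mem_filter, Finset.mem_univ, true_and]
    intro s hs hes
    have h1 : e.symm (c l) = s := by rw [← hes, e.symm_apply_apply]
    have h2 := hmin l (Finset.mem_univ l)
    rw [h1] at h2
    exact absurd hs (not_lt.2 h2)
  have hck : ∀ k : Fin (lam + 1), A (r k) (c k) ≠ 0 := by
    intro k h0
    have := hsign k
    rw [h0, zero_mul] at this
    exact lt_irrefl 0 this
  have hck' : ∀ k : Fin (lam + 1), A (r k) (c (k - 1)) ≠ 0 := by
    intro k h0
    have := hsign (k - 1)
    rw [sub_add_cancel, h0, mul_zero] at this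
    exact lt_irrefl 0 this
  have key : ∀ k : Fin (lam + 1),
      (∀ j' ∈ (Finset.univ.filter fun col => ∀ s : Fin n, s < t → e s ≠ col),
        j' ≠ c l0 → A (r k) j' = 0) → False := by
    intro k hall
    by_cases hk : c k = c l0
    · have hne : c (k - 1) ≠ c l0 := by
        rw [← hk]
        intro hh
        exact hone (sub_eq_self.mp (hc hh))
      exact hck' k (hall _ (hS _) hne)
    · exact hck k (hall _ (hS _) hk)
  have hcan := he t
  rw [het] at hcan
  rcases mul_neg_iff.mp (hsign l0) with ⟨hpos, hneg⟩ | ⟨hneg, hpos⟩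
  · rcases hcan with hP | hN
    · exact key l0 (hP _ hpos)
    · exact key (l0 + 1) (hN _ hneg)
  · rcases hcan with hP | hN
    · exact key (l0 + 1) (hP _ hpos)
    · exact key l0 (hN _ hneg)
end

section
/- Let A ∈ ℝ^{m×n} and let (I,J) be a forbidden pattern in A with minimum cardinality |I| = |J| ≥ 3. Then for every column j ∈ [n] ∖ J and all rows i_s, i_t ∈ I, one has a_{i_s j}·a_{i_t j} ≥ 0; that is, restricted to the rows of I, no column outside J contains entries of opposite signs. -/
/-! If column `j` had entries of opposite signs on two rows of the pattern, take two such rows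
`r u`, `r (u + d)` at minimal cyclic distance `d`, so that column `j` vanishes on the rows strictly
between them. The path `r u, c u, r (u + 1), …, c (u + d - 1), r (u + d)`, closed up by column `j`,
is a forbidden pattern of size `d + 1`; by minimality `d = λ`, so `r (u + d) = r (u - 1)`. But then
the rows `r (u - 1)`, `r u` with the columns `c (u - 1)`, `j` form a forbidden pattern of size
`2 < λ + 1`. -/

open Matrix Finset
open scoped Classical

open Fin.CommRing

def IsForbiddenPattern {m n lam : ℕ} (A : Matrix (Fin m) (Fin n) ℝ)
    (r : Fin (lam + 1) → Fin m) (c : Fin (lam + 1) → Fin n) : Prop :=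
  Function.Injective r ∧ Function.Injective c ∧
    (∀ l k : Fin (lam + 1), k ≠ l → k ≠ l + 1 → A (r k) (c l) = 0) ∧
    (∀ l : Fin (lam + 1), A (r l) (c l) * A (r (l + 1)) (c l) < 0)

namespace IsForbiddenPattern

variable {m n lam : ℕ} {A : Matrix (Fin m) (Fin n) ℝ}
  {r : Fin (lam + 1) → Fin m} {c : Fin (lam + 1) → Fin n}

theorem rotate (hp : IsForbiddenPattern A r c) (u : Fin (lam + 1)) :
    IsForbiddenPattern A (fun k => r (u + k)) (fun k => c (u + k)) := by
  obtain ⟨hr, hc, hz, hs⟩ := hp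
  refine ⟨hr.comp (add_right_injective u), hc.comp (add_right_injective u), ?_, fun l => ?_⟩
  · intro l k hkl hkl1
    refine hz _ _ (by simpa using hkl) ?_
    rw [add_assoc]
    simpa using hkl1
  · simpa only [add_assoc] using hs (u + l)

theorem pair {i i' : Fin m} {j j' : Fin n} (hi : i ≠ i') (hj : j ≠ j')
    (h₀ : A i j * A i' j < 0) (h₁ : A i' j' * A i j' < 0) :
    IsForbiddenPattern A ![i, i'] ![j, j'] := by
  refine ⟨?_, ?_, ?_, ?_⟩
  · simpa [Function.Injective, Fin.forall_fin_two] using ⟨hi, hi.symm⟩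
  · simpa [Function.Injective, Fin.forall_fin_two] using ⟨hj, hj.symm⟩
  · intro l k
    fin_cases l <;> fin_cases k <;> simp
  · intro l
    fin_cases l
    · exact h₀
    · exact h₁

theorem exists_of_sign_change (hp : IsForbiddenPattern A r c) {j : Fin n} (hj : ∀ l, c l ≠ j)
    {d : Fin (lam + 1)} (hd : A (r 0) j * A (r d) j < 0)
    (hzero : ∀ k, 0 < k → k < d → A (r k) j = 0) :
    ∃ (r₀ : Fin (d + 1) → Fin m) (c₀ : Fin (d + 1) → Fin n), IsForbiddenPattern A r₀ c₀ := by
  obtain ⟨hr, hc, hz, hs⟩ := hp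
  set ι : Fin (d + 1) → Fin (lam + 1) := Fin.castLE d.isLt
  have hι : Function.Injective ι := Fin.castLE_injective _
  have hι_last : ι (Fin.last d) = d := Fin.ext (by simp [ι])
  have hι_succ : ∀ l, l ≠ Fin.last d → ι (l + 1) = ι l + 1 := by
    intro l hl
    have hlt : (l : ℕ) < d := by simpa using Fin.val_lt_last hl
    have hιl : ι l < Fin.last lam := by
      simp only [ι, Fin.lt_def, Fin.val_castLE, Fin.val_last]
      omega
    ext
    rw [Fin.val_add_one_of_lt hιl]
    simp [ι, Fin.val_add_one_of_lt (Fin.lt_last_iff_ne_last.mpr hl)]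
  have hι_zero : ι 0 = 0 := Fin.ext (by simp [ι])
  refine ⟨r ∘ ι, fun k => if k = Fin.last d then j else c (ι k), hr.comp hι, ?_, ?_, ?_⟩
  · intro k k' h
    by_cases hk : k = Fin.last d <;> by_cases hk' : k' = Fin.last d <;>
      simp only [hk, hk', if_true, if_false] at h
    · exact hk.trans hk'.symm
    · exact absurd h.symm (hj _)
    · exact absurd h (hj _)
    · exact hι (hc h)
  · intro l k hkl hkl1
    by_cases hl : l = Fin.last d
    · subst hl
      simp only [Fin.last_add_one] at hkl1
      simp only [Function.comp_apply, if_true]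
      refine hzero _ (Fin.pos_iff_ne_zero.mpr fun h => hkl1 (hι (h.trans hι_zero.symm))) ?_
      rw [← hι_last]
      exact (Fin.castLE_lt_castLE_iff _).mpr (Fin.lt_last_iff_ne_last.mpr hkl)
    · simp only [Function.comp_apply, hl, if_false]
      exact hz _ _ (hι.ne hkl) (by rw [← hι_succ l hl]; exact hι.ne hkl1)
  · intro l
    by_cases hl : l = Fin.last d
    · subst hl
      simpa [Fin.last_add_one, hι_last, hι_zero, mul_comm] using hd
    · simp only [Function.comp_apply, hl, if_false, hι_succ l hl]
      exact hs _

end IsForbiddenPattern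

theorem Fin.exists_sign_change_of_mul_neg {N : ℕ} {f : Fin (N + 1) → ℝ} {s t : Fin (N + 1)}
    (hst : f s * f t < 0) :
    ∃ u d, f u * f (u + d) < 0 ∧ ∀ k, 0 < k → k < d → f (u + k) = 0 := by
  set D : Set (Fin (N + 1)) := {d | ∃ u, f u * f (u + d) < 0}
  have hD : D.Nonempty := ⟨t - s, s, by simpa using hst⟩
  set d := wellFounded_lt.min D hD
  obtain ⟨u, hu⟩ : d ∈ D := wellFounded_lt.min_mem D hD
  refine ⟨u, d, hu, fun k hk hkd => ?_⟩
  by_contra hfk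
  have hnear : 0 ≤ f u * f (u + k) := by
    by_contra! h
    exact wellFounded_lt.not_lt_min D ⟨u, h⟩ hkd
  have hfar : 0 ≤ f (u + k) * f (u + d) := by
    by_contra! h
    have hlt : d - k < d := by
      rw [Fin.lt_def, Fin.coe_sub_iff_le.mpr hkd.le]
      exact Nat.sub_lt (Fin.pos_of_ne_zero (ne_of_gt (hk.trans hkd))) hk
    exact wellFounded_lt.not_lt_min D ⟨u + k, by rwa [add_add_sub_cancel]⟩ hlt
  have hsq : 0 < f (u + k) ^ 2 := by positivity
  nlinarith [mul_nonneg hnear hfar]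

/-- `(r, c)` is a forbidden pattern of size `lam + 1 ≥ 3` of minimum cardinality. -/
theorem stmt2 {m n lam : ℕ} (A : Matrix (Fin m) (Fin n) ℝ) (hlam : 2 ≤ lam)
    (r : Fin (lam + 1) → Fin m) (c : Fin (lam + 1) → Fin n)
    (hr : Function.Injective r) (hc : Function.Injective c)
    (hz : ∀ l k : Fin (lam + 1), k ≠ l → k ≠ l + 1 → A (r k) (c l) = 0)
    (hs : ∀ l : Fin (lam + 1), A (r l) (c l) * A (r (l + 1)) (c l) < 0)
    (hmin : ∀ lam₀ : ℕ,
      ∀ r₀ : Fin (lam₀ + 1) → Fin m, ∀ c₀ : Fin (lam₀ + 1) → Fin n,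
        Function.Injective r₀ → Function.Injective c₀ →
        (∀ l k : Fin (lam₀ + 1), k ≠ l → k ≠ l + 1 → A (r₀ k) (c₀ l) = 0) →
        (∀ l : Fin (lam₀ + 1), A (r₀ l) (c₀ l) * A (r₀ (l + 1)) (c₀ l) < 0) →
        lam ≤ lam₀) :
    ∀ j : Fin n, (∀ l : Fin (lam + 1), c l ≠ j) →
      ∀ s t : Fin (lam + 1), 0 ≤ A (r s) j * A (r t) j := by
  intro j hj s t
  by_contra! hst
  have hmin' : ∀ lam₀ (r₀ : Fin (lam₀ + 1) → Fin m) (c₀ : Fin (lam₀ + 1) → Fin n),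
      IsForbiddenPattern A r₀ c₀ → lam ≤ lam₀ :=
    fun lam₀ r₀ c₀ ⟨hr₀, hc₀, hz₀, hs₀⟩ => hmin lam₀ r₀ c₀ hr₀ hc₀ hz₀ hs₀
  obtain ⟨u, d, hud, hzero⟩ := Fin.exists_sign_change_of_mul_neg (f := fun k => A (r k) j) hst
  obtain ⟨r₀, c₀, hp₀⟩ := (IsForbiddenPattern.rotate ⟨hr, hc, hz, hs⟩ u).exists_of_sign_change
    (fun l => hj _) (by simpa using hud) hzero
  obtain rfl : d = Fin.last lam :=
    Fin.ext (le_antisymm (Nat.lt_succ_iff.mp d.isLt) (hmin' _ _ _ hp₀))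
  have hshort := IsForbiddenPattern.pair (A := A)
    (i := r (u + Fin.last lam)) (i' := r u) (j := c (u + Fin.last lam)) (j' := j)
    (hr.ne (by simp [show lam ≠ 0 by omega])) (hj _)
    (by simpa [add_assoc, Fin.last_add_one] using hs (u + Fin.last lam)) hud
  exact absurd (hmin' 1 _ _ hshort) (by omega)
end

section
/- Fix d ≥ 1 and D = {0,1,…,d}. If a matrix A ∈ ℝ^{m×n} is universally connected (i.e., for every b ∈ ℝ^m the solution graph G(A,b) on {x ∈ D^n : Ax ≥ b} with edges between solutions at Hamming distance 1 is connected), then A does not have a forbidden pattern. -/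
open Matrix Finset
open scoped Classical

/-!
Take a forbidden pattern with the fewest rows, with rows `r l`, columns `c l`, and write
`α_l = A (r l) (c l)`, `β_l = A (r (l + 1)) (c l)`. On column `c l` let `u` take the value in
`{0, d}` that is best for row `r (l + 1)`, and let `w` be one unit away from it, towards the value
best for row `r l`; on the other columns `u = w`, best for the pattern rows where they agree in
sign. From `u` to `w` row `r l` changes by `|α_l| - |β_(l-1)|`, whereas moving coordinate `c l`
away from `u` lowers row `r (l + 1)` by at least `|β_l|`, below both values. So for
`b = min (A u) (A w)` no path from `u` ever moves a pattern column, and `w` is out of reach.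

A column on which the pattern rows have mixed signs needs a row of its own that locks it. With
three or more rows there is no such column: the nearest pair of opposite signs along the cycle
would close up a shorter pattern. With two rows both entries of such a column are nonzero, and
reversing the pattern if necessary gives `|β_(-1)| ≤ |α_0|`, so that row `r 0` locks it.
-/

open Fin.NatCast

section BestValue

variable {d : ℕ}

def HasMixedSigns {ι : Type*} (x : ι → ℝ) : Prop :=
  (∃ i, 0 < x i) ∧ ∃ i, x i < 0

/-- `v` maximizes `z ↦ a * z` over `z ∈ {0, …, d}`. -/
def IsBestValue (d : ℕ) (a : ℝ) (v : ℕ) : Prop :=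
  (0 < a → v = d) ∧ (a < 0 → v = 0)

lemma exists_isBestValue (a : ℝ) : ∃ v ≤ d, IsBestValue d a v := by
  by_cases ha : 0 < a
  · exact ⟨d, le_rfl, fun _ => rfl, fun h => absurd h (not_lt.2 ha.le)⟩
  · exact ⟨0, Nat.zero_le _, fun h => absurd h ha, fun _ => rfl⟩

lemma exists_isBestValue_forall {ι : Type*} {a : ι → ℝ} (h : ¬ HasMixedSigns a) :
    ∃ v ≤ d, ∀ i, IsBestValue d (a i) v := by
  by_cases hpos : ∃ i, 0 < a i
  · refine ⟨d, le_rfl, fun i => ⟨fun _ => rfl, fun hi => (h ⟨hpos, i, hi⟩).elim⟩⟩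
  · exact ⟨0, Nat.zero_le _, fun i => ⟨fun hi => (hpos ⟨i, hi⟩).elim, fun _ => rfl⟩⟩

lemma exists_isBestValue_step (hd : 1 ≤ d) {a b : ℝ} (hab : a * b < 0) :
    ∃ v w : ℕ, v ≤ d ∧ w ≤ d ∧ IsBestValue d b v ∧
      a * ((w : ℝ) - v) = |a| ∧ b * ((w : ℝ) - v) = -|b| := by
  rcases mul_neg_iff.1 hab with ⟨ha, hb⟩ | ⟨ha, hb⟩
  · refine ⟨0, 1, Nat.zero_le _, hd, ⟨fun h => absurd h (not_lt.2 hb.le), fun _ => rfl⟩, ?_, ?_⟩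
    · simp [abs_of_pos ha]
    · simp [abs_of_neg hb]
  · refine ⟨d, d - 1, le_rfl, Nat.sub_le _ _, ⟨fun _ => rfl, fun h => absurd h (not_lt.2 hb.le)⟩,
      ?_, ?_⟩
    · rw [Nat.cast_sub hd, abs_of_neg ha]; ring
    · rw [Nat.cast_sub hd, abs_of_pos hb]; ring

lemma IsBestValue.mul_add_abs_le {a : ℝ} {v z : ℕ} (hv : IsBestValue d a v) (hz : z ≤ d)
    (hzv : z ≠ v) : a * z + |a| ≤ a * v := by
  rcases lt_trichotomy a 0 with ha | rfl | ha
  · have hz1 : (1 : ℝ) ≤ z := by rw [hv.2 ha] at hzv; exact_mod_cast Nat.one_le_iff_ne_zero.2 hzv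
    rw [hv.2 ha, abs_of_neg ha, Nat.cast_zero]
    nlinarith
  · simp
  · have hz1 : (z : ℝ) + 1 ≤ d := by rw [hv.1 ha] at hzv; exact_mod_cast lt_of_le_of_ne hz hzv
    rw [hv.1 ha, abs_of_pos ha]
    nlinarith

lemma IsBestValue.mul_le {a : ℝ} {v z : ℕ} (hv : IsBestValue d a v) (hz : z ≤ d) :
    a * z ≤ a * v := by
  rcases eq_or_ne z v with rfl | hzv
  · exact le_rfl
  · linarith [hv.mul_add_abs_le hz hzv, abs_nonneg a]

lemma sum_mul_add_abs_le {ι : Type*} [Fintype ι] {a : ι → ℝ} {u y : ι → ℕ} {t : ι}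
    (hy : ∀ j, y j ≤ d) (hbest : ∀ j, y j ≠ u j → IsBestValue d (a j) (u j)) (ht : y t ≠ u t) :
    ∑ j, a j * y j + |a t| ≤ ∑ j, a j * u j := by
  have hterm : ∀ j, a j * y j ≤ a j * u j := fun j => by
    rcases eq_or_ne (y j) (u j) with h | h
    · rw [h]
    · exact (hbest j h).mul_le (hy j)
  calc ∑ j, a j * y j + |a t|
      ≤ ∑ j, a j * y j + (a t * u t - a t * y t) := by
        linarith [(hbest t ht).mul_add_abs_le (hy t) ht]
    _ ≤ ∑ j, a j * y j + ∑ j, (a j * u j - a j * y j) := by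
        gcongr
        exact Finset.single_le_sum (fun j _ => sub_nonneg.2 (hterm j)) (Finset.mem_univ t)
    _ = ∑ j, a j * u j := by rw [Finset.sum_sub_distrib]; ring

end BestValue

lemma exists_eq_of_hammingDist_eq_one {ι : Type*} [Fintype ι] {β : ι → Type*}
    [∀ i, DecidableEq (β i)] {x y : ∀ i, β i} (h : hammingDist x y = 1) :
    ∃ s, ∀ j, j ≠ s → x j = y j := by
  obtain ⟨s, hs⟩ := Finset.card_eq_one.1 h
  refine ⟨s, fun j hj => ?_⟩
  by_contra hne
  have : j ∈ Finset.univ.filter fun i => x i ≠ y i := Finset.mem_filter.2 ⟨Finset.mem_univ j, hne⟩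
  exact hj (Finset.mem_singleton.1 (hs ▸ this))

section SolutionGraph

variable {m n d : ℕ} {A : Matrix (Fin m) (Fin n) ℝ}

/-- By `hkey`, moving a coordinate `t ∈ K` away from `u` while the rest of `K` stays put pushes
row `i` below both `(A u) i` and `(A w) i`; so no path from `u` ever moves a coordinate of `K`. -/
lemma not_sgConn_of_locked {u w : Fin n → ℕ} (K : Set (Fin n)) (hu : ∀ j, u j ≤ d)
    (hw : ∀ j, w j ≤ d)
    (hkey : ∀ t ∈ K, ∃ i, IsBestValue d (A i t) (u t) ∧ (∀ j ∉ K, IsBestValue d (A i j) (u j)) ∧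
      0 < |A i t| ∧ ∑ j, A i j * u j < ∑ j, A i j * w j + |A i t|)
    (hne : ∃ t ∈ K, w t ≠ u t) :
    ¬ SGConn d A fun i => min (∑ j, A i j * u j) (∑ j, A i j * w j) := by
  set b : Fin m → ℝ := fun i => min (∑ j, A i j * u j) (∑ j, A i j * w j)
  have hlock : ∀ y, Feas d A b y → ∀ t ∈ K, (∀ j ∈ K, j ≠ t → y j = u j) → y t = u t := by
    intro y hy t ht hagree
    by_contra hyt
    obtain ⟨i, hit, hiK, hpos, hlt⟩ := hkey t ht
    have hbest : ∀ j, y j ≠ u j → IsBestValue d (A i j) (u j) := fun j hj => by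
      by_cases hjt : j = t
      · exact hjt ▸ hit
      · exact hiK j fun hjK => hj (hagree j hjK hjt)
    have hdrop := sum_mul_add_abs_le hy.1 hbest hyt
    have hfeas : b i ≤ ∑ j, A i j * y j := hy.2 i
    exact absurd hfeas (not_le.2 (lt_min (by linarith) (by linarith)))
  have hpath : ∀ z, Relation.ReflTransGen (SGAdj d A b) u z → ∀ t ∈ K, z t = u t := by
    intro z hz
    induction hz with
    | refl => exact fun _ _ => rfl
    | tail _ hadj ih =>
      obtain ⟨-, hy, hdist⟩ := hadj
      obtain ⟨s, hs⟩ := exists_eq_of_hammingDist_eq_one hdist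
      have hagree : ∀ j ∈ K, j ≠ s → _ = u j := fun j hj hjs => (hs j hjs).symm.trans (ih j hj)
      intro t ht
      rcases eq_or_ne t s with rfl | hts
      · exact hlock _ hy t ht hagree
      · exact hagree t ht hts
  intro hconn
  obtain ⟨t, ht, hwt⟩ := hne
  have hpath_w := hconn u w ⟨hu, fun _ => min_le_left _ _⟩ ⟨hw, fun _ => min_le_right _ _⟩
  exact hwt (hpath w hpath_w t ht)

end SolutionGraph

lemma exists_mul_neg_of_zero_between {N : ℕ} (hN : 2 ≤ N) (x : Fin (N + 1) → ℝ)
    {p q : Fin (N + 1)} (hpq : x p * x q < 0) :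
    ∃ p : Fin (N + 1), ∃ g : ℕ, g < N ∧ x p * x (p + g) < 0 ∧
      ∀ i, 0 < i → i < g → x (p + i) = 0 := by
  have hqp : 0 < (q - p).val ∧ ∃ p' : Fin (N + 1), x p' * x (p' + (q - p).val) < 0 := by
    refine ⟨Nat.pos_of_ne_zero fun h => ?_, p, by rwa [Fin.cast_val_eq_self, add_sub_cancel]⟩
    rw [Fin.val_eq_zero_iff, sub_eq_zero] at h
    exact (mul_self_nonneg _).not_gt (h ▸ hpq)
  have hex : ∃ g : ℕ, 0 < g ∧ ∃ p : Fin (N + 1), x p * x (p + g) < 0 := ⟨_, hqp⟩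
  obtain ⟨hg0, s, hs⟩ := Nat.find_spec hex
  have hmin : ∀ g < Nat.find hex, 0 < g → ∀ p' : Fin (N + 1), 0 ≤ x p' * x (p' + g) :=
    fun g hg hg0 p' => not_lt.1 fun h => Nat.find_min hex hg ⟨hg0, p', h⟩
  refine ⟨s, Nat.find hex, ?_, hs, fun i hi0 hig => ?_⟩
  · have hle : Nat.find hex ≤ N :=
      Nat.lt_succ_iff.1 ((Nat.find_min' hex hqp).trans_lt (q - p).is_lt)
    by_contra hge
    -- a gap of `N` is a gap of `1` read from the other end
    have hlast : s + (Nat.find hex : Fin (N + 1)) + 1 = s := by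
      rw [le_antisymm hle (not_lt.1 hge), Fin.natCast_eq_last, add_assoc, Fin.last_add_one,
        add_zero]
    have h1 := hmin 1 (by omega) one_pos (s + Nat.find hex)
    rw [Nat.cast_one, hlast, mul_comm] at h1
    exact h1.not_gt hs
  · -- a nonzero entry in between would split the sign change into a shorter one
    by_contra hne
    have h1 := hmin i hig hi0 s
    have h2 := hmin (Nat.find hex - i) (by omega) (by omega) (s + i)
    rw [add_assoc, ← Nat.cast_add, Nat.add_sub_cancel' hig.le] at h2
    have hsq : 0 < x (s + i) ^ 2 := by positivity
    nlinarith [mul_nonneg h1 h2]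

section Pattern

variable {m n lam : ℕ} {A : Matrix (Fin m) (Fin n) ℝ}

structure IsForbiddenPattern_s3 (A : Matrix (Fin m) (Fin n) ℝ) (r : Fin (lam + 1) → Fin m)
    (c : Fin (lam + 1) → Fin n) : Prop where
  injective_row : Function.Injective r
  injective_col : Function.Injective c
  eq_zero : ∀ l k : Fin (lam + 1), k ≠ l → k ≠ l + 1 → A (r k) (c l) = 0
  mul_neg : ∀ l : Fin (lam + 1), A (r l) (c l) * A (r (l + 1)) (c l) < 0

lemma hasFP_iff : HasFP A ↔ ∃ lam, ∃ r : Fin (lam + 1) → Fin m, ∃ c, IsForbiddenPattern_s3 A r c :=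
  ⟨fun ⟨lam, r, c, h₁, h₂, h₃, h₄⟩ => ⟨lam, r, c, h₁, h₂, h₃, h₄⟩,
    fun ⟨lam, r, c, h⟩ => ⟨lam, r, c, h.1, h.2, h.3, h.4⟩⟩

namespace IsForbiddenPattern_s3

variable {r : Fin (lam + 1) → Fin m} {c : Fin (lam + 1) → Fin n}

lemma sub_one_ne (hP : IsForbiddenPattern_s3 A r c) (l : Fin (lam + 1)) : l - 1 ≠ l := by
  intro h
  have := hP.mul_neg (l - 1)
  rw [sub_add_cancel, h] at this
  exact (mul_self_nonneg _).not_gt this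

lemma reverse (hP : IsForbiddenPattern_s3 A r c) :
    IsForbiddenPattern_s3 A (fun l => r (-l)) (fun l => c (-l - 1)) where
  injective_row := hP.injective_row.comp neg_injective
  injective_col := hP.injective_col.comp fun a b h => neg_injective (sub_left_injective h)
  eq_zero l k hkl hkl1 := hP.eq_zero _ _
    (fun h => hkl1 (neg_injective (h.trans (neg_add' l 1).symm)))
    (fun h => hkl (neg_injective (h.trans (sub_add_cancel _ _))))
  mul_neg l := by
    have := hP.mul_neg (-l - 1)
    rw [sub_add_cancel] at this
    rw [neg_add', mul_comm]
    exact this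

lemma exists_abs_le_of_two {r : Fin 2 → Fin m} {c : Fin 2 → Fin n}
    (hP : IsForbiddenPattern_s3 A r c) :
    ∃ (r' : Fin 2 → Fin m) (c' : Fin 2 → Fin n), IsForbiddenPattern_s3 A r' c' ∧
      |A (r' 0) (c' (0 - 1))| ≤ |A (r' 0) (c' 0)| := by
  by_cases h : |A (r 0) (c (0 - 1))| ≤ |A (r 0) (c 0)|
  · exact ⟨r, c, hP, h⟩
  · refine ⟨_, _, hP.reverse, ?_⟩
    simp only [neg_zero, zero_sub, neg_neg, sub_self] at h ⊢
    exact (not_le.1 h).le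

/-- A pattern on the rows `r p, …, r (p + g)`: the pattern columns between them, closed up by
the column `j`. -/
lemma exists_of_mul_neg (hP : IsForbiddenPattern_s3 A r c) {j : Fin n} (hj : j ∉ Set.range c)
    {p : Fin (lam + 1)} {g : ℕ} (hg : g ≤ lam) (hsign : A (r p) j * A (r (p + g)) j < 0)
    (hzero : ∀ i, 0 < i → i < g → A (r (p + i)) j = 0) :
    ∃ r' : Fin (g + 1) → Fin m, ∃ c', IsForbiddenPattern_s3 A r' c' := by
  set e : Fin (g + 1) → Fin (lam + 1) := fun i => p + (i.val : Fin (lam + 1))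
  have he_inj : Function.Injective e := fun a b h => Fin.ext <| by
    have := congrArg Fin.val (add_left_cancel h)
    rwa [Fin.val_cast_of_lt (by omega), Fin.val_cast_of_lt (by omega)] at this
  have he_succ : ∀ i, i ≠ Fin.last g → e (i + 1) = e i + 1 := fun i hi => by
    simp only [e, Fin.val_add_one_of_lt (Fin.lt_last_iff_ne_last.2 hi), Nat.cast_succ, add_assoc]
  refine ⟨r ∘ e, fun i => if i = Fin.last g then j else c (e i),
    ⟨hP.injective_row.comp he_inj, fun a b hab => ?_, fun l k hkl hkl1 => ?_, fun l => ?_⟩⟩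
  · by_cases ha : a = Fin.last g <;> by_cases hb : b = Fin.last g <;>
      simp only [ha, hb, if_true, if_false] at hab
    · exact ha.trans hb.symm
    · exact (hj ⟨_, hab.symm⟩).elim
    · exact (hj ⟨_, hab⟩).elim
    · exact he_inj (hP.injective_col hab)
  · by_cases hl : l = Fin.last g
    · subst hl
      rw [Fin.last_add_one] at hkl1
      simp only [if_true]
      exact hzero k (Nat.pos_of_ne_zero (Fin.val_ne_zero_iff.2 hkl1))
        (Fin.lt_last_iff_ne_last.2 hkl)
    · simp only [hl, if_false, Function.comp_apply]
      exact hP.eq_zero _ _ (he_inj.ne hkl) (he_succ l hl ▸ he_inj.ne hkl1)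
  · by_cases hl : l = Fin.last g
    · subst hl
      simpa [e, Fin.last_add_one, mul_comm] using hsign
    · simp only [hl, if_false, Function.comp_apply, he_succ l hl]
      exact hP.mul_neg (e l)

lemma sum_mul_eq_abs_sub_abs (hP : IsForbiddenPattern_s3 A r c) {δ : Fin n → ℝ}
    (hδ : ∀ j ∉ Set.range c, δ j = 0)
    (hα : ∀ k, A (r k) (c k) * δ (c k) = |A (r k) (c k)|)
    (hβ : ∀ k, A (r (k + 1)) (c k) * δ (c k) = -|A (r (k + 1)) (c k)|) (l : Fin (lam + 1)) :
    ∑ j, A (r l) j * δ j = |A (r l) (c l)| - |A (r l) (c (l - 1))| := by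
  have hβ' := hβ (l - 1)
  rw [sub_add_cancel] at hβ'
  rw [Fintype.sum_eq_add (c l) (c (l - 1)) (hP.injective_col.ne (hP.sub_one_ne l).symm),
    hα, hβ', ← sub_eq_add_neg]
  rintro j ⟨hjl, hjl1⟩
  by_cases hj : j ∈ Set.range c
  · obtain ⟨k, rfl⟩ := hj
    rw [hP.eq_zero k l (fun h => hjl (h ▸ rfl)) (fun h => hjl1 (by rw [h, add_sub_cancel_right])),
      zero_mul]
  · rw [hδ j hj, mul_zero]

variable {d : ℕ}

lemma exists_column_values (hd : 1 ≤ d) (hP : IsForbiddenPattern_s3 A r c)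
    (hmixed : ∀ j ∉ Set.range c, HasMixedSigns (fun l => A (r l) j) →
      ∃ l, 0 < |A (r l) j| ∧ |A (r l) (c (l - 1))| < |A (r l) (c l)| + |A (r l) j|)
    (j : Fin n) :
    ∃ v w : ℕ, v ≤ d ∧ w ≤ d ∧
      (∀ k, c k = j → IsBestValue d (A (r (k + 1)) j) v ∧ A (r k) j * ((w : ℝ) - v) = |A (r k) j|
        ∧ A (r (k + 1)) j * ((w : ℝ) - v) = -|A (r (k + 1)) j|) ∧
      (j ∉ Set.range c → w = v ∧
        (HasMixedSigns (fun l => A (r l) j) → ∃ l, IsBestValue d (A (r l) j) v ∧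
          0 < |A (r l) j| ∧ |A (r l) (c (l - 1))| < |A (r l) (c l)| + |A (r l) j|) ∧
        (¬ HasMixedSigns (fun l => A (r l) j) → ∀ l, IsBestValue d (A (r l) j) v)) := by
  by_cases hj : j ∈ Set.range c
  · obtain ⟨k, rfl⟩ := hj
    obtain ⟨v, w, hv, hw, hbest, hα, hβ⟩ := exists_isBestValue_step hd (hP.mul_neg k)
    refine ⟨v, w, hv, hw, fun k' hk' => ?_, fun h => (h ⟨k, rfl⟩).elim⟩
    obtain rfl := hP.injective_col hk'
    exact ⟨hbest, hα, hβ⟩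
  by_cases hmix : HasMixedSigns (fun l => A (r l) j)
  · obtain ⟨l, hl0, hlt⟩ := hmixed j hj hmix
    obtain ⟨v, hv, hbest⟩ := exists_isBestValue (d := d) (A (r l) j)
    exact ⟨v, v, hv, hv, fun k hk => (hj ⟨k, hk⟩).elim,
      fun _ => ⟨rfl, fun _ => ⟨l, hbest, hl0, hlt⟩, fun h => (h hmix).elim⟩⟩
  · obtain ⟨v, hv, hbest⟩ := exists_isBestValue_forall (d := d) hmix
    exact ⟨v, v, hv, hv, fun k hk => (hj ⟨k, hk⟩).elim,
      fun _ => ⟨rfl, fun h => (hmix h).elim, fun _ => hbest⟩⟩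

theorem not_univConn (hd : 1 ≤ d) (hP : IsForbiddenPattern_s3 A r c)
    (hmixed : ∀ j ∉ Set.range c, HasMixedSigns (fun l => A (r l) j) →
      ∃ l, 0 < |A (r l) j| ∧ |A (r l) (c (l - 1))| < |A (r l) (c l)| + |A (r l) j|) :
    ¬ UnivConn d A := by
  choose u w hu hw hpat hoff using hP.exists_column_values hd hmixed
  have hrow : ∀ l, ∑ j, A (r l) j * w j
      = ∑ j, A (r l) j * u j + (|A (r l) (c l)| - |A (r l) (c (l - 1))|) := fun l => by
    rw [← hP.sum_mul_eq_abs_sub_abs (δ := fun j => (w j : ℝ) - u j)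
      (fun j hj => by simp [(hoff j hj).1]) (fun k => (hpat (c k) k rfl).2.1)
      (fun k => (hpat (c k) k rfl).2.2) l, ← Finset.sum_add_distrib]
    exact Finset.sum_congr rfl fun j _ => by ring
  have hα : ∀ k, 0 < |A (r k) (c k)| := fun k =>
    abs_pos.2 (left_ne_zero_of_mul (hP.mul_neg k).ne)
  set K : Set (Fin n) := Set.range c ∪ {j | HasMixedSigns fun l => A (r l) j}
  have hbest_off : ∀ j ∉ K, ∀ l, IsBestValue d (A (r l) j) (u j) := fun j hj =>
    (hoff j fun h => hj (Or.inl h)).2.2 fun h => hj (Or.inr h)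
  intro hconn
  refine not_sgConn_of_locked K hu hw (fun t ht => ?_) ⟨c 0, Or.inl ⟨0, rfl⟩, fun h => ?_⟩
    (hconn _)
  · by_cases hc : t ∈ Set.range c
    · obtain ⟨k, rfl⟩ := hc
      have hw_row := hrow (k + 1)
      rw [add_sub_cancel_right] at hw_row
      refine ⟨r (k + 1), (hpat _ k rfl).1, fun j hj => hbest_off j hj _,
        abs_pos.2 (right_ne_zero_of_mul (hP.mul_neg k).ne), by linarith [hα (k + 1)]⟩
    · obtain ⟨l, hbest, hpos, hlt⟩ := (hoff t hc).2.1 (ht.resolve_left hc)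
      exact ⟨r l, hbest, fun j hj => hbest_off j hj _, hpos, by linarith [hrow l]⟩
  · have := (hpat (c 0) 0 rfl).2.1
    rw [h, sub_self, mul_zero] at this
    exact (hα 0).ne this

end IsForbiddenPattern_s3

end Pattern

theorem stmt3 {m n : ℕ} (d : ℕ) (hd : 1 ≤ d) (A : Matrix (Fin m) (Fin n) ℝ)
    (h : UnivConn d A) : ¬ HasFP A := by
  rw [hasFP_iff]
  intro hFP
  obtain ⟨lam, ⟨r, c, hP⟩, hmin⟩ : ∃ lam, (∃ r : Fin (lam + 1) → Fin m, ∃ c,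
      IsForbiddenPattern_s3 A r c) ∧ ∀ k < lam, ¬ ∃ r : Fin (k + 1) → Fin m, ∃ c,
      IsForbiddenPattern_s3 A r c :=
    ⟨_, Nat.find_spec hFP, fun k => Nat.find_min hFP⟩
  rcases lam with _ | _ | lam
  · exact hP.sub_one_ne 0 (by decide)
  · obtain ⟨r, c, hP, hle⟩ := hP.exists_abs_le_of_two
    refine hP.not_univConn hd (fun j _ ⟨⟨p, hp⟩, ⟨q, hq⟩⟩ => ?_) h
    have hj0 : 0 < |A (r 0) j| := abs_pos.2 fun h0 => by
      fin_cases p <;> fin_cases q <;> simp_all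
      linarith
    exact ⟨0, hj0, by linarith⟩
  · refine hP.not_univConn hd (fun j hj ⟨⟨p, hp⟩, ⟨q, hq⟩⟩ => ?_) h
    obtain ⟨p, g, hg, hs, hz⟩ := exists_mul_neg_of_zero_between (by omega) (fun l => A (r l) j)
      (mul_neg_of_pos_of_neg hp hq)
    exact (hmin g hg (hP.exists_of_mul_neg hj hg.le hs hz)).elim
end

section
/- Let A ∈ ℝ^{2×n}. If A does not have an elimination ordering, then there exist two distinct columns j_1, j_2 such that a_{1 j_1}·a_{2 j_1} < 0 and a_{1 j_2}·a_{2 j_2} < 0; in particular A has a forbidden pattern of size 2. -/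
open Matrix Finset
open scoped Classical

/-- A "good" column (non-negative product of its two entries) can always be eliminated. -/
lemma canElim_good {n : ℕ} (A : Matrix (Fin 2) (Fin n) ℝ) (S : Finset (Fin n)) (j : Fin n)
    (h : ¬ A 0 j * A 1 j < 0) : CanElim A S j := by
  rcases mul_nonneg_iff.mp (not_lt.mp h) with ⟨h0, h1⟩ | ⟨h0, h1⟩
  · right
    intro i hi
    fin_cases i
    · exact absurd hi (not_lt.mpr h0)
    · exact absurd hi (not_lt.mpr h1)
  · left
    intro i hi
    fin_cases i
    · exact absurd hi (not_lt.mpr h0)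
    · exact absurd hi (not_lt.mpr h1)

theorem stmt4 {n : ℕ} (A : Matrix (Fin 2) (Fin n) ℝ) (h : ¬ HasEO A) :
    (∃ j₁ j₂ : Fin n, j₁ ≠ j₂ ∧ A 0 j₁ * A 1 j₁ < 0 ∧ A 0 j₂ * A 1 j₂ < 0) ∧ HasFP A := by
  have key : ∃ j₁ j₂ : Fin n, j₁ ≠ j₂ ∧ A 0 j₁ * A 1 j₁ < 0 ∧ A 0 j₂ * A 1 j₂ < 0 := by
    by_contra hc
    push_neg at hc
    apply h
    by_cases hbad : ∃ j : Fin n, A 0 j * A 1 j < 0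
    · obtain ⟨j₀, hj₀⟩ := hbad
      have hn : 0 < n := j₀.pos
      set L : Fin n := ⟨n - 1, by omega⟩ with hL
      refine ⟨Equiv.swap L j₀, fun t => ?_⟩
      by_cases ht : t = L
      · subst ht
        left
        intro i _ j' hj' hne
        exfalso
        simp only [Finset.mem_filter, Finset.mem_univ, true_and] at hj'
        have hLmap : Equiv.swap L j₀ L = j₀ := Equiv.swap_apply_left L j₀
        obtain ⟨s, hs⟩ := (Equiv.swap L j₀).surjective j'
        have hsne : s ≠ L := by
          intro hsL; apply hne; rw [← hs, hsL, hLmap]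
        have hsL : s < L := by
          have h1 : (s : ℕ) < n := s.isLt
          have h2 : (s : ℕ) ≠ n - 1 := fun hh => hsne (Fin.ext hh)
          exact Fin.lt_def.mpr (by simp [hL]; omega)
        exact hj' s hsL hs
      · apply canElim_good
        have : Equiv.swap L j₀ t ≠ j₀ := by
          intro hh
          apply ht
          have := (Equiv.swap L j₀).injective (hh.trans (Equiv.swap_apply_left L j₀).symm)
          exact this
        intro hlt
        exact absurd hj₀ (not_lt.mpr (hc _ _ this hlt))
    · push_neg at hbad
      exact ⟨Equiv.refl _, fun t => canElim_good A _ _ (not_lt.mpr (hbad _))⟩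
  refine ⟨key, ?_⟩
  obtain ⟨j₁, j₂, hne, h1, h2⟩ := key
  refine ⟨1, id, ![j₁, j₂], Function.injective_id, ?_, ?_, ?_⟩
  · intro a b hab
    fin_cases a <;> fin_cases b <;> simp_all
  · intro l k hkl hkl1
    exfalso
    fin_cases l <;> fin_cases k <;> simp_all
  · intro l
    fin_cases l
    · simpa using h1
    · have : (1 : Fin 2) + 1 = 0 := rfl
      simpa [this, mul_comm] using h2
end

section
/- Let A ∈ ℝ^{3×n} be a matrix that does not have an elimination ordering. Then A has a forbidden pattern. -/
open Matrix Finset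
open scoped Classical

lemma opp_of_ne {a b c : ℝ} (hab : a * b < 0) (hc : c ≠ 0) :
    c * a < 0 ∨ c * b < 0 := by
  rcases hc.lt_or_gt with h | h <;>
    rcases mul_neg_iff.mp hab with ⟨h1, h2⟩ | ⟨h1, h2⟩
  · exact Or.inl (mul_neg_of_neg_of_pos h h1)
  · exact Or.inr (mul_neg_of_neg_of_pos h h2)
  · exact Or.inr (mul_neg_of_pos_of_neg h h2)
  · exact Or.inl (mul_neg_of_pos_of_neg h h1)

lemma twoPattern {n : ℕ} (A : Matrix (Fin 3) (Fin n) ℝ) {i1 i2 : Fin 3} {j1 j2 : Fin n}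
    (hj : j1 ≠ j2) (h1 : A i1 j1 * A i2 j1 < 0) (h2 : A i1 j2 * A i2 j2 < 0) :
    HasFP A := by
  have hi : i1 ≠ i2 := by rintro rfl; nlinarith [mul_self_nonneg (A i1 j1)]
  refine ⟨1, ![i1, i2], ![j1, j2], ?_, ?_, ?_, ?_⟩
  · intro x y hxy; fin_cases x <;> fin_cases y <;> simp_all
  · intro x y hxy; fin_cases x <;> fin_cases y <;> simp_all
  · intro l k hk hk1; exfalso; revert hk hk1; revert l k; decide
  · intro l; fin_cases l
    · simpa using h1
    · simpa [mul_comm] using h2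

lemma threePattern {n : ℕ} (A : Matrix (Fin 3) (Fin n) ℝ) {p q m : Fin 3} {j0 j1 j2 : Fin n}
    (hpq : p ≠ q) (hmp : m ≠ p) (hmq : m ≠ q)
    (h01 : j0 ≠ j1) (h02 : j0 ≠ j2) (h12 : j1 ≠ j2)
    (s0 : A p j0 * A q j0 < 0) (s1 : A q j2 * A m j2 < 0) (s2 : A m j1 * A p j1 < 0)
    (z0 : A m j0 = 0) (z1 : A p j2 = 0) (z2 : A q j1 = 0) :
    HasFP A := by
  refine ⟨2, ![p, q, m], ![j0, j2, j1], ?_, ?_, ?_, ?_⟩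
  · intro x y hxy; fin_cases x <;> fin_cases y <;> simp_all
  · intro x y hxy; fin_cases x <;> fin_cases y <;> simp_all
  · intro l k hk hk1
    fin_cases l <;> fin_cases k <;> simp_all
  · intro l; fin_cases l
    · simpa using s0
    · simpa using s1
    · simpa using s2

lemma third : ∀ p q : Fin 3, p ≠ q →
    ∃ m : Fin 3, m ≠ p ∧ m ≠ q ∧ ∀ i : Fin 3, i = p ∨ i = q ∨ i = m := by decide

lemma exists_elim {n : ℕ} (A : Matrix (Fin 3) (Fin n) ℝ) (hFP : ¬ HasFP A)
    (S : Finset (Fin n)) (hS : S.Nonempty) : ∃ j ∈ S, CanElim A S j := by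
  by_contra hne
  push_neg at hne
  -- structured negation of CanElim
  have hneg : ∀ j ∈ S,
      (∃ i, 0 < A i j ∧ ∃ j' ∈ S, j' ≠ j ∧ A i j' ≠ 0) ∧
      (∃ i, A i j < 0 ∧ ∃ j' ∈ S, j' ≠ j ∧ A i j' ≠ 0) := by
    intro j hj
    have := hne j hj
    rw [CanElim] at this
    push_neg at this
    exact this
  -- no pair of rows has opposite signs in two distinct columns
  have noDouble : ∀ j j' : Fin n, j ≠ j' → ∀ a b : Fin 3,
      A a j * A b j < 0 → A a j' * A b j' < 0 → False := by
    intro j j' hjj a b h h'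
    exact hFP (twoPattern A hjj h h')
  -- every non-eliminable column has an opposite partner for any nonzero entry
  have partner : ∀ j ∈ S, ∀ p : Fin 3, A p j ≠ 0 → ∃ w, A p j * A w j < 0 := by
    intro j hj p hp
    rcases hp.lt_or_gt with h | h
    · obtain ⟨i, hi, -⟩ := (hneg j hj).1
      exact ⟨i, mul_neg_of_neg_of_pos h hi⟩
    · obtain ⟨i, hi, -⟩ := (hneg j hj).2
      exact ⟨i, mul_neg_of_pos_of_neg h hi⟩
  obtain ⟨j0, hj0⟩ := hS
  obtain ⟨⟨p, hp, jp, hjpS, hjp0, hAp⟩, ⟨q, hq, jq, hjqS, hjq0, hAq⟩⟩ := hneg j0 hj0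
  have hpq : p ≠ q := by rintro rfl; exact absurd hq (not_lt.mpr hp.le)
  obtain ⟨m, hmp, hmq, hall⟩ := third p q hpq
  have s0 : A p j0 * A q j0 < 0 := mul_neg_of_pos_of_neg hp hq
  -- partner of p in column jp must be m
  have hPM : A p jp * A m jp < 0 := by
    obtain ⟨w, hw⟩ := partner jp hjpS p hAp
    have hwp : w ≠ p := by intro h; rw [h] at hw; nlinarith [mul_self_nonneg (A p jp)]
    rcases hall w with rfl | rfl | rfl
    · exact absurd rfl hwp
    · exact absurd (noDouble j0 jp (Ne.symm hjp0) p w s0 hw) id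
    · exact hw
  have hQM : A q jq * A m jq < 0 := by
    obtain ⟨w, hw⟩ := partner jq hjqS q hAq
    have hwq : w ≠ q := by intro h; rw [h] at hw; nlinarith [mul_self_nonneg (A q jq)]
    rcases hall w with rfl | rfl | rfl
    · exact absurd (noDouble j0 jq (Ne.symm hjq0) w q s0 (by nlinarith)) id
    · exact absurd rfl hwq
    · exact hw
  by_cases hje : jp = jq
  · -- single column j := jp covering {p,m} and {q,m}
    subst hje
    have hm : A m jp ≠ 0 := by intro h; rw [h] at hPM; nlinarith
    -- the only row sharing the sign of A m jp is m, and it has another nonzero column j3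
    have hm3 : ∃ j3 ∈ S, j3 ≠ jp ∧ A m j3 ≠ 0 := by
      rcases hm.lt_or_gt with h | h
      · obtain ⟨i, hi, j3, hj3S, hj3, hA3⟩ := (hneg jp hjpS).2
        have : i = m := by
          rcases hall i with rfl | rfl | rfl
          · nlinarith
          · nlinarith
          · rfl
        subst this; exact ⟨j3, hj3S, hj3, hA3⟩
      · obtain ⟨i, hi, j3, hj3S, hj3, hA3⟩ := (hneg jp hjpS).1
        have : i = m := by
          rcases hall i with rfl | rfl | rfl
          · nlinarith
          · nlinarith
          · rfl
        subst this; exact ⟨j3, hj3S, hj3, hA3⟩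
    obtain ⟨j3, hj3S, hj3, hA3⟩ := hm3
    obtain ⟨w, hw⟩ := partner j3 hj3S m hA3
    have hwm : w ≠ m := by intro h; rw [h] at hw; nlinarith [mul_self_nonneg (A m j3)]
    rcases hall w with rfl | rfl | rfl
    · exact noDouble jp j3 (Ne.symm hj3) m w (by nlinarith) hw
    · exact noDouble jp j3 (Ne.symm hj3) m w (by nlinarith) hw
    · exact absurd rfl hwm
  · -- three distinct columns j0, jp, jq : build the 3-cycle pattern
    have z0 : A m j0 = 0 := by
      by_contra hm0
      rcases opp_of_ne s0 hm0 with h | h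
      · exact noDouble j0 jp (Ne.symm hjp0) m p h (by nlinarith)
      · exact noDouble j0 jq (Ne.symm hjq0) m q h (by nlinarith)
    have z2 : A q jp = 0 := by
      by_contra hq1
      rcases opp_of_ne hPM hq1 with h | h
      · exact noDouble jp j0 hjp0 q p h (by nlinarith)
      · exact noDouble jp jq hje q m h (by nlinarith)
    have z1 : A p jq = 0 := by
      by_contra hp2
      rcases opp_of_ne hQM hp2 with h | h
      · exact noDouble jq j0 hjq0 p q h (by nlinarith)
      · exact noDouble jq jp (Ne.symm hje) p m h (by nlinarith)
    exact hFP (threePattern A hpq hmp hmq (Ne.symm hjp0) (Ne.symm hjq0) hje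
      s0 hQM (by nlinarith) z0 z1 z2)

lemma exists_list {n : ℕ} (A : Matrix (Fin 3) (Fin n) ℝ) (hFP : ¬ HasFP A)
    (S : Finset (Fin n)) : ∃ L : List (Fin n), L.Nodup ∧ L.toFinset = S ∧
      ∀ t (ht : t < L.length), CanElim A (L.drop t).toFinset L[t] := by
  induction S using Finset.strongInduction with
  | _ S ih =>
    rcases S.eq_empty_or_nonempty with rfl | hS
    · exact ⟨[], by simp, by simp, fun t ht => by simp at ht⟩
    · obtain ⟨j, hjS, hej⟩ := exists_elim A hFP S hS
      obtain ⟨L, hnd, hts, hcan⟩ := ih (S.erase j) (Finset.erase_ssubset hjS)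
      have hjL : j ∉ L := by
        intro hmem
        exact (Finset.notMem_erase j S) (hts ▸ List.mem_toFinset.mpr hmem)
      have hset : (j :: L).toFinset = S := by
        simp only [List.toFinset_cons, hts]
        exact Finset.insert_erase hjS
      refine ⟨j :: L, by simp [hnd, hjL], hset, ?_⟩
      intro t ht
      cases t with
      | zero => simpa [hset] using hej
      | succ t => exact hcan t (by simpa using ht)

theorem stmt5 {n : ℕ} (A : Matrix (Fin 3) (Fin n) ℝ) (h : ¬ HasEO A) : HasFP A := by
  by_contra hFP
  apply h
  obtain ⟨L, hnd, hts, hcan⟩ := exists_list A hFP Finset.univ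
  have hlen : L.length = n := by
    have := List.toFinset_card_of_nodup hnd
    rw [hts, Finset.card_univ, Fintype.card_fin] at this
    exact this.symm
  have hinj : Function.Injective (fun t : Fin n => L.get (Fin.cast hlen.symm t)) := by
    intro a b hab
    have := (List.nodup_iff_injective_get.mp hnd) hab
    simpa [Fin.ext_iff] using congrArg Fin.val this
  refine ⟨Equiv.ofBijective _ ((Finite.injective_iff_bijective).mp hinj), fun t => ?_⟩
  have hset : (Finset.univ.filter fun c => ∀ s : Fin n, s < t →
      (Equiv.ofBijective _ ((Finite.injective_iff_bijective).mp hinj)) s ≠ c)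
      = (L.drop (t : ℕ)).toFinset := by
    ext c
    simp only [Finset.mem_filter, Finset.mem_univ, true_and, List.mem_toFinset,
      Equiv.ofBijective_apply]
    constructor
    · intro hc
      have hcL : c ∈ L := by
        rw [← List.mem_toFinset, hts]; exact Finset.mem_univ c
      obtain ⟨i, hiL, hi⟩ := List.mem_iff_getElem.mp hcL
      have hti : (t : ℕ) ≤ i := by
        by_contra hlt
        push_neg at hlt
        exact hc ⟨i, by omega⟩ (by simpa [Fin.lt_def] using hlt) (by simpa [List.get] using hi)
      have hrw : (t : ℕ) + (i - (t : ℕ)) = i := by omega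
      refine List.mem_iff_getElem.mpr ⟨i - (t : ℕ), by simp [List.length_drop]; omega, ?_⟩
      rw [List.getElem_drop]
      simp only [hrw]
      exact hi
    · intro hc s hst hsc
      obtain ⟨k, hk, hkc⟩ := List.mem_iff_getElem.mp hc
      rw [List.getElem_drop] at hkc
      have hs : L.get (Fin.cast hlen.symm s) = c := hsc
      have : (s : ℕ) = (t : ℕ) + k :=
        hnd.getElem_inj_iff.mp (by simpa [List.get] using hs.trans hkc.symm)
      have hst' : (s : ℕ) < (t : ℕ) := hst
      omega
  rw [hset]
  exact hcan (t : ℕ) (by omega)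
end

section
/- Let A ∈ ℝ^{m×2}. If A does not have an elimination ordering, then there exist distinct rows i_1, i_2 such that sgn(a_{i_1 j}) = −sgn(a_{i_2 j}) ≠ 0 for both columns j ∈ {1,2}; in particular A has a forbidden pattern. -/
open Matrix Finset
open scoped Classical

lemma canElim_mono' {m n : ℕ} (A : Matrix (Fin m) (Fin n) ℝ) (S : Finset (Fin n)) (j : Fin n)
    (hc : CanElim A Finset.univ j) : CanElim A S j := by
  rcases hc with h1 | h1
  · exact Or.inl fun i hi j' _ hne => h1 i hi j' (Finset.mem_univ _) hne
  · exact Or.inr fun i hi j' _ hne => h1 i hi j' (Finset.mem_univ _) hne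

lemma notCanElim' {m : ℕ} (A : Matrix (Fin m) (Fin 2) ℝ) (h : ¬ HasEO A) (j : Fin 2) :
    ¬ CanElim A Finset.univ j := by
  intro hc
  apply h
  refine ⟨Equiv.swap 0 j, fun t => ?_⟩
  fin_cases t
  · simpa [Equiv.swap_apply_left] using canElim_mono' A _ j hc
  · left
    intro i _ j' hj' hne
    exfalso
    simp only [mem_filter] at hj'
    obtain ⟨s, hs⟩ := (Equiv.swap 0 j).surjective j'
    fin_cases s
    · exact hj'.2 0 (by decide) hs
    · exact hne hs.symm

lemma pairfind' {m : ℕ} (A : Matrix (Fin m) (Fin 2) ℝ)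
    (ia ib ic id : Fin m)
    (ha0 : 0 < A ia 0) (ha1 : A ia 1 ≠ 0)
    (hb0 : A ib 0 < 0) (hb1 : A ib 1 ≠ 0)
    (hc1 : 0 < A ic 1) (hc0 : A ic 0 ≠ 0)
    (hd1 : A id 1 < 0) (hd0 : A id 0 ≠ 0) :
    ∃ i₁ i₂ : Fin m, A i₁ 0 * A i₂ 0 < 0 ∧ A i₁ 1 * A i₂ 1 < 0 := by
  rcases ha1.lt_or_gt with h1 | h1 <;>
  rcases hb1.lt_or_gt with h2 | h2 <;>
  rcases hc0.lt_or_gt with h3 | h3 <;>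
  rcases hd0.lt_or_gt with h4 | h4 <;>
  first
  | exact ⟨ia, ib, by nlinarith, by nlinarith⟩
  | exact ⟨ic, id, by nlinarith, by nlinarith⟩
  | exact ⟨ia, id, by nlinarith, by nlinarith⟩
  | exact ⟨ib, id, by nlinarith, by nlinarith⟩
  | exact ⟨ib, ic, by nlinarith, by nlinarith⟩
  | exact ⟨ia, ic, by nlinarith, by nlinarith⟩

lemma buildFP' {m : ℕ} (A : Matrix (Fin m) (Fin 2) ℝ) (i₁ i₂ : Fin m)
    (h0 : A i₁ 0 * A i₂ 0 < 0) (h1 : A i₁ 1 * A i₂ 1 < 0) : HasFP A := by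
  have hne : i₁ ≠ i₂ := by
    rintro rfl; exact absurd h0 (not_lt.2 (mul_self_nonneg _))
  refine ⟨1, ![i₁, i₂], id, ?_, Function.injective_id, ?_, ?_⟩
  · intro x y hxy
    fin_cases x <;> fin_cases y <;> simp_all <;> exact hne hxy.symm
  · intro l k hkl hkl1
    exfalso
    fin_cases l <;> fin_cases k <;> simp_all <;> omega
  · intro l
    fin_cases l
    · simpa using h0
    · show A (![i₁, i₂] 1) (id 1) * A (![i₁, i₂] (1 + 1)) (id 1) < 0
      have e : (1 : Fin 2) + 1 = 0 := rfl
      rw [e]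
      simpa [mul_comm] using h1

theorem stmt6 {m : ℕ} (A : Matrix (Fin m) (Fin 2) ℝ) (h : ¬ HasEO A) :
    (∃ i₁ i₂ : Fin m, i₁ ≠ i₂ ∧ ∀ j : Fin 2,
      Real.sign (A i₁ j) = - Real.sign (A i₂ j) ∧ Real.sign (A i₁ j) ≠ 0) ∧ HasFP A := by
  have key : ∃ i₁ i₂ : Fin m, A i₁ 0 * A i₂ 0 < 0 ∧ A i₁ 1 * A i₂ 1 < 0 := by
    have h0 := notCanElim' A h 0
    have h1 := notCanElim' A h 1
    simp only [CanElim, not_or, not_forall] at h0 h1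
    obtain ⟨⟨ia, ha0, ja, _, hja, ha1⟩, ⟨ib, hb0, jb, _, hjb, hb1⟩⟩ := h0
    obtain ⟨⟨ic, hc1, jc, _, hjc, hc0⟩, ⟨id, hd1, jd, _, hjd, hd0⟩⟩ := h1
    have eja : ja = 1 := by omega
    have ejb : jb = 1 := by omega
    have ejc : jc = 0 := by omega
    have ejd : jd = 0 := by omega
    subst eja ejb ejc ejd
    exact pairfind' A ia ib ic id ha0 ha1 hb0 hb1 hc1 hc0 hd1 hd0
  obtain ⟨i₁, i₂, k0, k1⟩ := key
  have hne : i₁ ≠ i₂ := by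
    rintro rfl; exact absurd k0 (not_lt.2 (mul_self_nonneg _))
  refine ⟨⟨i₁, i₂, hne, ?_⟩, buildFP' A i₁ i₂ k0 k1⟩
  intro j
  have hj : A i₁ j * A i₂ j < 0 := by fin_cases j <;> assumption
  rcases mul_neg_iff.mp hj with ⟨hp, hn⟩ | ⟨hn, hp⟩
  · rw [Real.sign_of_pos hp, Real.sign_of_neg hn]; norm_num
  · rw [Real.sign_of_neg hn, Real.sign_of_pos hp]; norm_num
end

section
/- Let A ∈ ℝ^{4×3} be a matrix with no elimination ordering. If A can be eliminated at some column j ∈ [3], then A has a forbidden pattern (of size 2, using the other two columns). -/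
open Matrix Finset
open scoped Classical

lemma fin3_all : ∀ (a b c d : Fin 3), a ≠ b → a ≠ c → b ≠ c → d = a ∨ d = b ∨ d = c := by decide

lemma buildEO (A : Matrix (Fin 4) (Fin 3) ℝ) (j0 j1 j2 : Fin 3)
    (h01 : j0 ≠ j1) (h02 : j0 ≠ j2) (h12 : j1 ≠ j2)
    (h0 : CanElim A Finset.univ j0)
    (h1 : CanElim A (Finset.univ.filter fun c => j0 ≠ c) j1) : HasEO A := by
  have hinj : Function.Injective ![j0, j1, j2] := by
    intro a b hab
    fin_cases a <;> fin_cases b <;> simp_all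
  have hbij : Function.Bijective ![j0, j1, j2] :=
    (Fintype.bijective_iff_injective_and_card _).2 ⟨hinj, rfl⟩
  refine ⟨Equiv.ofBijective _ hbij, ?_⟩
  intro t
  fin_cases t
  · have hS : (Finset.univ.filter fun c : Fin 3 =>
        ∀ s : Fin 3, s < (⟨0, by omega⟩ : Fin 3) → Equiv.ofBijective _ hbij s ≠ c) = Finset.univ := by
      ext c; simp
    rw [hS]
    exact h0
  · have hS : (Finset.univ.filter fun c : Fin 3 =>
        ∀ s : Fin 3, s < (⟨1, by omega⟩ : Fin 3) → Equiv.ofBijective _ hbij s ≠ c) =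
        (Finset.univ.filter fun c => j0 ≠ c) := by
      ext c
      simp only [Finset.mem_filter, Finset.mem_univ, true_and, Equiv.ofBijective_apply]
      constructor
      · intro hh
        have := hh 0 (by decide)
        simpa using this
      · intro hh s hs
        have hs0 : s = 0 := by fin_cases s <;> simp_all
        subst hs0
        simpa using hh
    rw [hS]
    simpa using h1
  · left
    intro i _ j' hj' hne
    exfalso
    simp only [Finset.mem_filter, Finset.mem_univ, true_and, Equiv.ofBijective_apply] at hj'
    have e0 := hj' 0 (by decide)
    have e1 := hj' 1 (by decide)
    simp at e0 e1
    have hne2 : j' ≠ j2 := by simpa using hne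
    rcases fin3_all j0 j1 j2 j' h01 h02 h12 with rfl | rfl | rfl
    · exact e0 rfl
    · exact e1 rfl
    · exact hne2 rfl

theorem stmt7 (A : Matrix (Fin 4) (Fin 3) ℝ) (h : ¬ HasEO A)
    (j : Fin 3) (hj : CanElim A Finset.univ j) :
    ∃ i₁ i₂ : Fin 4, i₁ ≠ i₂ ∧ ∃ j₁ j₂ : Fin 3, j₁ ≠ j₂ ∧ j₁ ≠ j ∧ j₂ ≠ j ∧
      A i₁ j₁ * A i₂ j₁ < 0 ∧ A i₁ j₂ * A i₂ j₂ < 0 := by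
  have hex : ∀ j : Fin 3, ∃ j1 j2 : Fin 3, j ≠ j1 ∧ j ≠ j2 ∧ j1 ≠ j2 := by decide
  obtain ⟨j1, j2, hjj1, hjj2, hj12⟩ := hex j
  have n1 : ¬ CanElim A (Finset.univ.filter fun c => j ≠ c) j1 := fun hc =>
    h (buildEO A j j1 j2 hjj1 hjj2 hj12 hj hc)
  have n2 : ¬ CanElim A (Finset.univ.filter fun c => j ≠ c) j2 := fun hc =>
    h (buildEO A j j2 j1 hjj2 hjj1 hj12.symm hj hc)
  unfold CanElim at n1 n2
  push_neg at n1 n2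
  obtain ⟨⟨a, ha, ja, hjaS, hja1, ha2⟩, b, hb, jb, hjbS, hjb1, hb2⟩ := n1
  obtain ⟨⟨c, hc, jc, hjcS, hjc1, hc2⟩, d, hd, jd, hjdS, hjd1, hd2⟩ := n2
  simp only [Finset.mem_filter, Finset.mem_univ, true_and] at hjaS hjbS hjcS hjdS
  -- resolve the "other column" identities
  have hja : ja = j2 := by
    rcases fin3_all j j1 j2 ja hjj1 hjj2 hj12 with rfl | rfl | rfl
    · exact absurd rfl hjaS
    · exact absurd rfl hja1
    · rfl
  have hjb : jb = j2 := by
    rcases fin3_all j j1 j2 jb hjj1 hjj2 hj12 with rfl | rfl | rfl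
    · exact absurd rfl hjbS
    · exact absurd rfl hjb1
    · rfl
  have hjc : jc = j1 := by
    rcases fin3_all j j1 j2 jc hjj1 hjj2 hj12 with rfl | rfl | rfl
    · exact absurd rfl hjcS
    · rfl
    · exact absurd rfl hjc1
  have hjd : jd = j1 := by
    rcases fin3_all j j1 j2 jd hjj1 hjj2 hj12 with rfl | rfl | rfl
    · exact absurd rfl hjdS
    · rfl
    · exact absurd rfl hjd1
  rw [hja] at ha2; rw [hjb] at hb2; rw [hjc] at hc2; rw [hjd] at hd2
  -- now: ha : 0 < A a j1, ha2 : A a j2 ≠ 0; hb : A b j1 < 0, hb2 : A b j2 ≠ 0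
  -- hc : 0 < A c j2, hc2 : A c j1 ≠ 0; hd : A d j2 < 0, hd2 : A d j1 ≠ 0
  have finish : ∀ i₁ i₂ : Fin 4, A i₁ j1 * A i₂ j1 < 0 → A i₁ j2 * A i₂ j2 < 0 →
      ∃ i₁ i₂ : Fin 4, i₁ ≠ i₂ ∧ ∃ j₁ j₂ : Fin 3, j₁ ≠ j₂ ∧ j₁ ≠ j ∧ j₂ ≠ j ∧
        A i₁ j₁ * A i₂ j₁ < 0 ∧ A i₁ j₂ * A i₂ j₂ < 0 := by
    intro i₁ i₂ p1 p2
    refine ⟨i₁, i₂, ?_, j1, j2, hj12, hjj1.symm, hjj2.symm, p1, p2⟩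
    intro he
    rw [he] at p1
    exact absurd p1 (not_lt.2 (mul_self_nonneg _))
  rcases ha2.lt_or_gt with ha2' | ha2'
  · rcases hb2.lt_or_gt with hb2' | hb2'
    · -- A a j2 < 0, A b j2 < 0 : use c (0 < A c j2)
      rcases hc2.lt_or_gt with hc2' | hc2'
      · exact finish a c (mul_neg_of_pos_of_neg ha hc2') (mul_neg_of_neg_of_pos ha2' hc)
      · exact finish b c (mul_neg_of_neg_of_pos hb hc2') (mul_neg_of_neg_of_pos hb2' hc)
    · exact finish a b (mul_neg_of_pos_of_neg ha hb) (mul_neg_of_neg_of_pos ha2' hb2')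
  · rcases hb2.lt_or_gt with hb2' | hb2'
    · exact finish a b (mul_neg_of_pos_of_neg ha hb) (mul_neg_of_pos_of_neg ha2' hb2')
    · -- both positive in j2 : use d (A d j2 < 0)
      rcases hd2.lt_or_gt with hd2' | hd2'
      · exact finish a d (mul_neg_of_pos_of_neg ha hd2') (mul_neg_of_pos_of_neg ha2' hd)
      · exact finish b d (mul_neg_of_neg_of_pos hb hd2') (mul_neg_of_pos_of_neg hb2' hd)
end

section
/- Fix d ≥ 1 and D = {0,…,d}. Let A ∈ ℝ^{4×3} have the sign pattern: a_{11}, a_{12}, a_{21}, a_{33} > 0; a_{22}, a_{31}, a_{41}, a_{43} < 0; a_{13} = a_{23} = a_{32} = a_{42} = 0. Then for every b ∈ ℝ^4, the solution graph G(A,b) on {x ∈ D^3 : Ax ≥ b}, with edges between vectors at Hamming distance 1, is connected. -/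
open Matrix Finset
open scoped Classical

/-! Every row either avoids column `2` and is nondecreasing in `x 0`, or avoids column `1` and is
nonincreasing in `x 0`. So from `s` to `t` with `t 0 ≤ s 0`, first setting coordinate `1` to `t 1`
and then lowering coordinate `0` to `t 0` keeps each row at least its value at `s` or at `t`;
the last step sets coordinate `2`. -/

lemma hammingDist_eq_one_of_eq_off {ι : Type*} [Fintype ι] {β : ι → Type*}
    [∀ i, DecidableEq (β i)] {x y : ∀ i, β i} (j : ι) (hne : x ≠ y)
    (h : ∀ k, k ≠ j → x k = y k) : hammingDist x y = 1 := by
  refine le_antisymm ?_ (hammingDist_pos.2 hne)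
  calc hammingDist x y ≤ ({j} : Finset ι).card :=
        Finset.card_le_card fun k hk => by
          by_contra hkj
          exact (Finset.mem_filter.1 hk).2 (h k (Finset.mem_singleton.not.1 hkj))
    _ = 1 := Finset.card_singleton j

instance {m n d : ℕ} {A : Matrix (Fin m) (Fin n) ℝ} {b : Fin m → ℝ} :
    Std.Symm (SGAdj d A b) where
  symm _ _ := fun ⟨hx, hy, h⟩ => ⟨hy, hx, by rwa [hammingDist_comm]⟩

lemma reflTransGen_sgAdj_of_eq_off {m n d : ℕ} {A : Matrix (Fin m) (Fin n) ℝ} {b : Fin m → ℝ}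
    {x y : Fin n → ℕ} (hx : Feas d A b x) (hy : Feas d A b y) (j : Fin n)
    (h : ∀ k, k ≠ j → x k = y k) : Relation.ReflTransGen (SGAdj d A b) x y := by
  obtain rfl | hne := eq_or_ne x y
  · exact .refl
  · exact .single ⟨hx, hy, hammingDist_eq_one_of_eq_off j hne h⟩

lemma Feas.of_coord_of_row {m n d : ℕ} {A : Matrix (Fin m) (Fin n) ℝ} {b : Fin m → ℝ}
    {x y z : Fin n → ℕ} (hx : Feas d A b x) (hy : Feas d A b y)
    (hz : ∀ j, z j = x j ∨ z j = y j)
    (hrow : ∀ i, ∑ j, A i j * (x j : ℝ) ≤ ∑ j, A i j * (z j : ℝ) ∨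
      ∑ j, A i j * (y j : ℝ) ≤ ∑ j, A i j * (z j : ℝ)) :
    Feas d A b z := by
  refine ⟨fun j => ?_, fun i => ?_⟩
  · rcases hz j with h | h <;> rw [h]
    exacts [hx.1 j, hy.1 j]
  · rcases hrow i with h | h
    exacts [(hx.2 i).trans h, (hy.2 i).trans h]

section RowSigns

variable {m d : ℕ} {A : Matrix (Fin m) (Fin 3) ℝ} {b : Fin m → ℝ}

lemma reflTransGen_sgAdj_of_rowSigns
    (hA : ∀ i, (A i 2 = 0 ∧ 0 ≤ A i 0) ∨ (A i 1 = 0 ∧ A i 0 ≤ 0))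
    {s t : Fin 3 → ℕ} (hs : Feas d A b s) (ht : Feas d A b t) (hst : t 0 ≤ s 0) :
    Relation.ReflTransGen (SGAdj d A b) s t := by
  have hst' : (t 0 : ℝ) ≤ s 0 := Nat.cast_le.2 hst
  have hu : Feas d A b ![s 0, t 1, s 2] := by
    refine hs.of_coord_of_row ht (fun j => by fin_cases j <;> simp) fun i => ?_
    simp only [Fin.sum_univ_three, Matrix.cons_val]
    rcases hA i with ⟨h2, h0⟩ | ⟨h1, -⟩
    · right
      rw [h2, zero_mul, zero_mul]
      linarith [mul_le_mul_of_nonneg_left hst' h0]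
    · left
      simp [h1]
  have hv : Feas d A b ![t 0, t 1, s 2] := by
    refine hs.of_coord_of_row ht (fun j => by fin_cases j <;> simp) fun i => ?_
    simp only [Fin.sum_univ_three, Matrix.cons_val]
    rcases hA i with ⟨h2, -⟩ | ⟨h1, h0⟩
    · right
      simp [h2]
    · left
      rw [h1, zero_mul, zero_mul]
      linarith [mul_le_mul_of_nonpos_left hst' h0]
  have hsu := reflTransGen_sgAdj_of_eq_off hs hu 1 fun k hk => by fin_cases k <;> simp_all
  have huv := reflTransGen_sgAdj_of_eq_off hu hv 0 fun k hk => by fin_cases k <;> simp_all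
  have hvt := reflTransGen_sgAdj_of_eq_off hv ht 2 fun k hk => by fin_cases k <;> simp_all
  exact (hsu.trans huv).trans hvt

lemma sgConn_of_rowSigns (hA : ∀ i, (A i 2 = 0 ∧ 0 ≤ A i 0) ∨ (A i 1 = 0 ∧ A i 0 ≤ 0)) :
    SGConn d A b := by
  intro s t hs ht
  rcases le_total (t 0) (s 0) with h | h
  · exact reflTransGen_sgAdj_of_rowSigns hA hs ht h
  · exact Relation.ReflTransGen.stdSymm.symm _ _ (reflTransGen_sgAdj_of_rowSigns hA ht hs h)

end RowSigns

theorem stmt9_general (d : ℕ) (A : Matrix (Fin 4) (Fin 3) ℝ)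
    (h11 : 0 < A 0 0) (h13 : A 0 2 = 0)
    (h21 : 0 < A 1 0) (h23 : A 1 2 = 0)
    (h31 : A 2 0 < 0) (h32 : A 2 1 = 0)
    (h41 : A 3 0 < 0) (h42 : A 3 1 = 0) :
    ∀ b : Fin 4 → ℝ, SGConn d A b := by
  intro b
  refine sgConn_of_rowSigns fun i => ?_
  fin_cases i
  exacts [.inl ⟨h13, h11.le⟩, .inl ⟨h23, h21.le⟩, .inr ⟨h32, h31.le⟩, .inr ⟨h42, h41.le⟩]

theorem stmt9 (d : ℕ) (hd : 1 ≤ d) (A : Matrix (Fin 4) (Fin 3) ℝ)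
    (h11 : 0 < A 0 0) (h12 : 0 < A 0 1) (h13 : A 0 2 = 0)
    (h21 : 0 < A 1 0) (h22 : A 1 1 < 0) (h23 : A 1 2 = 0)
    (h31 : A 2 0 < 0) (h32 : A 2 1 = 0) (h33 : 0 < A 2 2)
    (h41 : A 3 0 < 0) (h42 : A 3 1 = 0) (h43 : A 3 2 < 0) :
    ∀ b : Fin 4 → ℝ, SGConn d A b :=
  stmt9_general d A h11 h13 h21 h23 h31 h32 h41 h42
end

section
/- Fix d ≥ 1 and D = {0,…,d}. Let A^F ∈ ℝ^{λ×λ} (λ ≥ 2) be a matrix whose support lies in positions (ℓ,ℓ) and (ℓ+1,ℓ) (indices mod λ), with a^F_{ℓℓ}·a^F_{ℓ+1,ℓ} < 0 for all ℓ. Define b ∈ ℝ^λ by b_s = Σ_k a^F_{sk}·d·SF(a^F_{kk}) if max_t |a^F_{st}| ≠ |a^F_{ss}|, and b_s = Σ_k a^F_{sk}(d·SF(a^F_{kk}) − sgn(a^F_{kk})) otherwise, where SF(a) = (1+sgn(a))/2. Define p, q ∈ D^λ by p_t = d·SF(a^F_{tt}) and q_t = d·SF(a^F_{tt}) − sgn(a^F_{tt}).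 Then p and q are both feasible solutions of A^F x ≥ b, p ≠ q, and every vector at Hamming distance 1 from p in D^λ is infeasible; consequently G(A^F,b) is disconnected. -/
open Matrix Finset
open scoped Classical

noncomputable def SF (a : ℝ) : ℝ := (1 + Real.sign a) / 2

/-- The matrix has size `lam + 1 ≥ 2`. -/
theorem stmt10 (d : ℕ) (hd : 1 ≤ d) (lam : ℕ) (hlam : 1 ≤ lam)
    (A : Matrix (Fin (lam + 1)) (Fin (lam + 1)) ℝ)
    (hsupp : ∀ i j : Fin (lam + 1), i ≠ j → i ≠ j + 1 → A i j = 0)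
    (hsign : ∀ j : Fin (lam + 1), A j j * A (j + 1) j < 0)
    (b : Fin (lam + 1) → ℝ)
    (hb : ∀ s : Fin (lam + 1), b s =
      if ∃ t : Fin (lam + 1), |A s s| < |A s t| then
        ∑ k : Fin (lam + 1), A s k * (d * SF (A k k))
      else
        ∑ k : Fin (lam + 1), A s k * (d * SF (A k k) - Real.sign (A k k)))
    (p q : Fin (lam + 1) → ℕ)
    (hp : ∀ t : Fin (lam + 1), p t = if 0 < A t t then d else 0)
    (hq : ∀ t : Fin (lam + 1), q t = if 0 < A t t then d - 1 else 1) :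
    Feas d A b p ∧ Feas d A b q ∧ p ≠ q ∧
      (∀ y : Fin (lam + 1) → ℕ, (∀ j, y j ≤ d) → hammingDist p y = 1 → ¬ Feas d A b y) ∧
      ¬ SGConn d A b := by
  -- Fin facts
  have hone : (1 : Fin (lam + 1)) ≠ 0 := by
    have h1 : (1 : Fin (lam + 1)).val = 1 := by
      simp [Fin.val_one', Nat.mod_eq_of_lt, Nat.lt_of_lt_of_le]
      omega
    intro h
    rw [h] at h1
    simp at h1
  have hne : ∀ s : Fin (lam + 1), s - 1 ≠ s := by
    intro s h
    exact hone (sub_eq_self.mp h)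
  have hsub : ∀ s : Fin (lam + 1), (s - 1) + 1 = s := fun s => sub_add_cancel s 1
  have hDne : ∀ k : Fin (lam + 1), A k k ≠ 0 := by
    intro k h
    have := hsign k
    rw [h, zero_mul] at this
    exact lt_irrefl _ this
  have hopp : ∀ s : Fin (lam + 1), A (s - 1) (s - 1) * A s (s - 1) < 0 := by
    intro s
    have := hsign (s - 1)
    rwa [hsub s] at this
  have hEne : ∀ s : Fin (lam + 1), A s (s - 1) ≠ 0 := by
    intro s h
    have := hopp s
    rw [h, mul_zero] at this
    exact lt_irrefl _ this
  -- row sum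
  have rowsum : ∀ (x : Fin (lam + 1) → ℝ) (s : Fin (lam + 1)),
      ∑ k, A s k * x k = A s s * x s + A s (s - 1) * x (s - 1) := by
    intro x s
    have hsub2 : ∑ k ∈ ({s, s - 1} : Finset (Fin (lam + 1))), A s k * x k
        = ∑ k, A s k * x k := by
      apply Finset.sum_subset (Finset.subset_univ _)
      intro k _ hk
      simp only [Finset.mem_insert, Finset.mem_singleton] at hk
      push_neg at hk
      have h1 : s ≠ k := fun h => hk.1 h.symm
      have h2 : s ≠ k + 1 := by
        intro h
        apply hk.2
        rw [eq_sub_iff_add_eq, ← h]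
      rw [hsupp s k h1 h2, zero_mul]
    rw [← hsub2, Finset.sum_pair (Ne.symm (hne s))]
  have hSF_pos : ∀ a : ℝ, 0 < a → SF a = 1 := by
    intro a ha
    simp [SF, Real.sign_of_pos ha]
  have hSF_neg : ∀ a : ℝ, a < 0 → SF a = 0 := by
    intro a ha
    simp [SF, Real.sign_of_neg ha]
  have hpR : ∀ k : Fin (lam + 1), (p k : ℝ) = d * SF (A k k) := by
    intro k
    rcases lt_or_gt_of_ne (hDne k) with hneg | hpos
    · rw [hp k, if_neg (by linarith), hSF_neg _ hneg]
      simp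
    · rw [hp k, if_pos hpos, hSF_pos _ hpos]
      simp
  have hqR : ∀ k : Fin (lam + 1), (q k : ℝ) = d * SF (A k k) - Real.sign (A k k) := by
    intro k
    rcases lt_or_gt_of_ne (hDne k) with hneg | hpos
    · rw [hq k, if_neg (by linarith), hSF_neg _ hneg, Real.sign_of_neg hneg]
      simp
    · rw [hq k, if_pos hpos, hSF_pos _ hpos, Real.sign_of_pos hpos]
      rw [Nat.cast_sub hd]
      simp
  have key1 : ∀ s : Fin (lam + 1),
      ∑ k, A s k * Real.sign (A k k) = |A s s| - |A s (s - 1)| := by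
    intro s
    rw [rowsum]
    have h1 : A s s * Real.sign (A s s) = |A s s| := by
      rcases lt_or_gt_of_ne (hDne s) with h | h
      · rw [Real.sign_of_neg h, abs_of_neg h]; ring
      · rw [Real.sign_of_pos h, abs_of_pos h]; ring
    have h2 : A s (s - 1) * Real.sign (A (s - 1) (s - 1)) = -|A s (s - 1)| := by
      have hop := hopp s
      rcases lt_or_gt_of_ne (hDne (s - 1)) with h | h
      · have hE : 0 < A s (s - 1) := by nlinarith
        rw [Real.sign_of_neg h, abs_of_pos hE]; ring
      · have hE : A s (s - 1) < 0 := by nlinarith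
        rw [Real.sign_of_pos h, abs_of_neg hE]; ring
    rw [h1, h2]
    ring
  have hcond : ∀ s : Fin (lam + 1),
      (∃ t, |A s s| < |A s t|) ↔ |A s s| < |A s (s - 1)| := by
    intro s
    constructor
    · rintro ⟨t, ht⟩
      rcases eq_or_ne t (s - 1) with rfl | htne
      · exact ht
      · exfalso
        rcases eq_or_ne t s with rfl | hts
        · exact lt_irrefl _ ht
        · have h0 : A s t = 0 := by
            apply hsupp s t (Ne.symm hts)
            intro h
            exact htne (by rw [eq_sub_iff_add_eq, ← h])
          rw [h0, abs_zero] at ht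
          exact absurd ht (not_lt.mpr (abs_nonneg _))
    · intro h
      exact ⟨s - 1, h⟩
  have hsum_p : ∀ s : Fin (lam + 1),
      ∑ k, A s k * (p k : ℝ) = ∑ k, A s k * (d * SF (A k k)) := by
    intro s
    apply Finset.sum_congr rfl
    intro k _
    rw [hpR k]
  have hbs_alt : ∀ s : Fin (lam + 1),
      ∑ k, A s k * (d * SF (A k k) - Real.sign (A k k)) =
        (∑ k, A s k * (d * SF (A k k))) - (|A s s| - |A s (s - 1)|) := by
    intro s
    rw [← key1 s, ← Finset.sum_sub_distrib]
    apply Finset.sum_congr rfl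
    intro k _
    ring
  have hsum_q : ∀ s : Fin (lam + 1),
      ∑ k, A s k * (q k : ℝ) =
        (∑ k, A s k * (d * SF (A k k))) - (|A s s| - |A s (s - 1)|) := by
    intro s
    rw [← hbs_alt s]
    apply Finset.sum_congr rfl
    intro k _
    rw [hqR k]
  have feasp : Feas d A b p := by
    constructor
    · intro j
      rw [hp j]
      split <;> omega
    · intro s
      rw [hb s]
      have hs := hsum_p s
      split_ifs with h
      · linarith [le_of_eq hs.symm]
      · rw [hbs_alt s]
        have hle : |A s (s - 1)| ≤ |A s s| := not_lt.mp (fun hlt => h ((hcond s).mpr hlt))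
        linarith
  have feasq : Feas d A b q := by
    constructor
    · intro j
      rw [hq j]
      split <;> omega
    · intro s
      rw [hb s, hsum_q s]
      split_ifs with h
      · have hlt := (hcond s).mp h
        linarith
      · rw [hbs_alt s]
  have nbr : ∀ y : Fin (lam + 1) → ℕ, (∀ j, y j ≤ d) → hammingDist p y = 1 →
      ¬ Feas d A b y := by
    intro y hy hdist hfeas
    rw [hammingDist] at hdist
    obtain ⟨j, hj⟩ := Finset.card_eq_one.mp hdist
    have hyj : p j ≠ y j := by
      have : j ∈ Finset.univ.filter fun i => p i ≠ y i := by
        rw [hj]; exact Finset.mem_singleton_self j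
      simpa using this
    have heqk : ∀ k, k ≠ j → p k = y k := by
      intro k hk
      by_contra hc
      have : k ∈ Finset.univ.filter fun i => p i ≠ y i := by simpa using hc
      rw [hj, Finset.mem_singleton] at this
      exact hk this
    have hrow := hfeas.2 j
    rw [rowsum (fun k => ((y k : ℕ) : ℝ)) j] at hrow
    have hy1 : ((y (j - 1) : ℕ) : ℝ) = ((p (j - 1) : ℕ) : ℝ) := by
      rw [heqk (j - 1) (hne j)]
    have hdiag : A j j * (y j : ℝ) ≤ A j j * (p j : ℝ) - |A j j| := by
      rcases lt_or_gt_of_ne (hDne j) with hneg | hpos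
      · have hp0 : p j = 0 := by rw [hp j, if_neg (by linarith)]
        have hy0 : 1 ≤ y j := by
          rcases Nat.eq_zero_or_pos (y j) with h0 | h0
          · exact absurd (hp0.trans h0.symm) hyj
          · exact h0
        have : (1 : ℝ) ≤ (y j : ℝ) := by exact_mod_cast hy0
        rw [hp0, abs_of_neg hneg]
        push_cast
        nlinarith
      · have hpd : p j = d := by rw [hp j, if_pos hpos]
        have hyd : y j + 1 ≤ d := by
          have h1 := hy j
          have h2 : d ≠ y j := hpd ▸ hyj
          omega
        have : (y j : ℝ) + 1 ≤ (d : ℝ) := by exact_mod_cast hyd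
        rw [hpd, abs_of_pos hpos]
        nlinarith
    have e1 : ∑ k, A j k * (d * SF (A k k)) =
        A j j * (p j : ℝ) + A j (j - 1) * (p (j - 1) : ℝ) := by
      rw [← hsum_p j]
      exact rowsum (fun k => ((p k : ℕ) : ℝ)) j
    rw [hb j] at hrow
    split_ifs at hrow with h
    · rw [e1] at hrow
      rw [hy1] at hrow
      have habs : 0 < |A j j| := abs_pos.mpr (hDne j)
      linarith
    · rw [hbs_alt j, e1, hy1] at hrow
      have habs : 0 < |A j (j - 1)| := abs_pos.mpr (hEne j)
      have hle : |A j (j - 1)| ≤ |A j j| := not_lt.mp (fun hlt => h ((hcond j).mpr hlt))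
      linarith
  have hpq : p ≠ q := by
    intro h
    have h0 := congrFun h 0
    rw [hp 0, hq 0] at h0
    split_ifs at h0 <;> omega
  refine ⟨feasp, feasq, hpq, nbr, ?_⟩
  intro hconn
  rcases (hconn p q feasp feasq).cases_head with h | ⟨c, hadj, _⟩
  · exact hpq h
  · exact nbr c hadj.2.1.1 hadj.2.2 hadj.2.1
end

section
/- Let A ∈ ℝ^{3×3} and suppose that for every column j of A there exist two rows with entries of opposite signs in column j (so A cannot be eliminated at any column in the strong sense that each column contains both a positive and a negative entry). Then A has a forbidden pattern. -/
open Matrix Finset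
open scoped Classical

/-! Auxiliary decidable facts about `Fin 2` and `Fin 3`. -/

lemma fin2_vac : ∀ l k : Fin 2, k = l ∨ k = l + 1 := by decide

lemma fin3_compl : ∀ a b : Fin 3, a ≠ b →
    ∃ e, e ≠ a ∧ e ≠ b ∧ ∀ d, d ≠ e → d = a ∨ d = b := by decide

lemma fin3_pair : ∀ a b c d e : Fin 3, a ≠ b → c ≠ d → a ≠ e → b ≠ e → c ≠ e → d ≠ e →
    (c = a ∧ d = b) ∨ (c = b ∧ d = a) := by decide

lemma fin3_third : ∀ l k : Fin 3, k ≠ l → k ≠ l + 1 → k + 1 = l := by decide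

lemma fin3_succ : ∀ l : Fin 3, l + 1 ≠ l ∧ l + 1 + 1 ≠ l ∧ l + 1 ≠ l + 1 + 1 := by decide

theorem stmt15 (A : Matrix (Fin 3) (Fin 3) ℝ)
    (h : ∀ j : Fin 3, ∃ i₁ i₂ : Fin 3, i₁ ≠ i₂ ∧ A i₁ j * A i₂ j < 0) :
    HasFP A := by
  by_cases H : ∃ i₁ i₂ j₁ j₂ : Fin 3, i₁ ≠ i₂ ∧ j₁ ≠ j₂ ∧
      A i₁ j₁ * A i₂ j₁ < 0 ∧ A i₁ j₂ * A i₂ j₂ < 0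
  · -- a λ = 2 pattern
    obtain ⟨i₁, i₂, j₁, j₂, hi, hj, h1, h2⟩ := H
    refine ⟨1, ![i₁, i₂], ![j₁, j₂], ?_, ?_, ?_, ?_⟩
    · intro a b hab
      fin_cases a <;> fin_cases b <;> simp_all
    · intro a b hab
      fin_cases a <;> fin_cases b <;> simp_all
    · intro l k hk1 hk2
      rcases fin2_vac l k with hk | hk
      · exact absurd hk hk1
      · exact absurd hk hk2
    · intro l
      fin_cases l
      · simpa using h1
      · simpa [mul_comm] using h2
  · push_neg at H
    choose i₁ i₂ hne hneg using h
    have hm : ∀ j, ∃ e, e ≠ i₁ j ∧ e ≠ i₂ j ∧ ∀ d, d ≠ e → d = i₁ j ∨ d = i₂ j :=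
      fun j => fin3_compl _ _ (hne j)
    choose m hm1 hm2 hm3 using hm
    -- any pair avoiding `m j` opposes in column `j`
    have pairneg : ∀ j a b : Fin 3, a ≠ b → a ≠ m j → b ≠ m j → A a j * A b j < 0 := by
      intro j a b hab ha hb
      rcases fin3_pair (i₁ j) (i₂ j) a b (m j) (hne j) hab
        (fun e => (hm1 j) e.symm) (fun e => (hm2 j) e.symm) ha hb with ⟨e1, e2⟩ | ⟨e1, e2⟩
      · rw [e1, e2]; exact hneg j
      · rw [e1, e2, mul_comm]; exact hneg j
    have hminj : Function.Injective m := by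
      intro j j' hjj
      by_contra hjne
      exact absurd (pairneg j' _ _ (hne j) (fun e => (hm1 j) (e.trans hjj.symm).symm)
          (fun e => (hm2 j) (e.trans hjj.symm).symm))
        (not_lt.mpr (H (i₁ j) (i₂ j) j j' (hne j) hjne (hneg j)))
    have hmsurj : Function.Surjective m := (Finite.injective_iff_bijective.mp hminj).surjective
    have hzero : ∀ j, A (m j) j = 0 := by
      intro j
      by_contra hz
      -- `A (m j) j` opposes one of `i₁ j`, `i₂ j`; call it `x`, the other `y`
      obtain ⟨x, y, hxy, hx, hneg'⟩ :
          ∃ x y : Fin 3, x ≠ y ∧ ({x, y} : Set (Fin 3)) = {i₁ j, i₂ j} ∧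
            A (m j) j * A x j < 0 := by
        rcases mul_neg_iff.mp (hneg j) with ⟨hp, hn⟩ | ⟨hn, hp⟩
        · rcases lt_or_gt_of_ne hz with hmlt | hmgt
          · exact ⟨i₁ j, i₂ j, hne j, rfl, mul_neg_iff.mpr (Or.inr ⟨hmlt, hp⟩)⟩
          · exact ⟨i₂ j, i₁ j, (hne j).symm, Set.pair_comm _ _,
              mul_neg_iff.mpr (Or.inl ⟨hmgt, hn⟩)⟩
        · rcases lt_or_gt_of_ne hz with hmlt | hmgt
          · exact ⟨i₂ j, i₁ j, (hne j).symm, Set.pair_comm _ _,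
              mul_neg_iff.mpr (Or.inr ⟨hmlt, hp⟩)⟩
          · exact ⟨i₁ j, i₂ j, hne j, rfl, mul_neg_iff.mpr (Or.inl ⟨hmgt, hn⟩)⟩
      have hxm : x ≠ m j := by
        have : x ∈ ({i₁ j, i₂ j} : Set (Fin 3)) := hx ▸ Set.mem_insert x {y}
        rcases this with hx1 | hx2
        · exact fun e => (hm1 j) (hx1 ▸ e.symm)
        · exact fun e => (hm2 j) (hx2 ▸ e.symm)
      have hym : y ≠ m j := by
        have : y ∈ ({i₁ j, i₂ j} : Set (Fin 3)) := hx ▸ Set.mem_insert_of_mem x rfl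
        rcases this with hy1 | hy2
        · exact fun e => (hm1 j) (hy1 ▸ e.symm)
        · exact fun e => (hm2 j) (hy2 ▸ e.symm)
      obtain ⟨j', hj'⟩ := hmsurj y
      have hjne : j ≠ j' := fun e => hym (hj' ▸ (congrArg m e)).symm
      exact absurd (pairneg j' (m j) x (fun e => hxm e.symm)
          (fun e => hym ((hj' ▸ e : m j = y)).symm)
          (fun e => hxy (hj' ▸ e : x = y)))
        (not_lt.mpr (H (m j) x j j' (fun e => hxm e.symm) hjne hneg'))
    refine ⟨2, fun k => m (k + 1), id, ?_, Function.injective_id, ?_, ?_⟩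
    · intro a b hab
      exact add_right_cancel (hminj hab)
    · intro l k hk1 hk2
      have hkl : k + 1 = l := fin3_third l k hk1 hk2
      show A (m (k + 1)) l = 0
      rw [hkl]; exact hzero l
    · intro l
      show A (m (l + 1)) l * A (m (l + 1 + 1)) l < 0
      obtain ⟨h1, h2, h3⟩ := fin3_succ l
      exact pairneg l _ _ (fun e => h3 (hminj e)) (fun e => h1 (hminj e))
        (fun e => h2 (hminj e))
end

section
/- Fix d ≥ 1 and D = {0,…,d}. Let A ∈ ℝ^{m×n} have an elimination ordering. Then A is universally connected: for every b ∈ ℝ^m, the graph on {x ∈ D^n : Ax ≥ b} with edges at Hamming distance 1 is connected. -/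
open Matrix Finset
open scoped Classical

/-! Eliminate the columns in order while keeping two feasible points `x`, `y` that agree off the
remaining columns `S`. If at column `j` every row with a positive entry vanishes on the rest of
`S`, both points can walk coordinate `j` down to `min x_j y_j` inside `G(A,b)`: rows with
`A i j ≤ 0` only improve, and a row with `A i j > 0` evaluates both points alike, so the point
already at the minimum witnesses it. Negative rows are symmetric, walking up to the maximum. -/

namespace SolutionGraph

variable {m n : ℕ} {d : ℕ} {A : Matrix (Fin m) (Fin n) ℝ} {b : Fin m → ℝ}

lemma hammingDist_update_update (x : Fin n → ℕ) (j : Fin n) {u v : ℕ} (huv : u ≠ v) :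
    hammingDist (Function.update x j u) (Function.update x j v) = 1 := by
  have : (univ.filter fun k => Function.update x j u k ≠ Function.update x j v k) = {j} := by
    ext k
    by_cases hk : k = j
    · subst hk; simpa using huv
    · simp [hk]
  simp [hammingDist, this]

lemma sum_mul_update (i : Fin m) (x : Fin n → ℕ) (j : Fin n) (v : ℕ) :
    ∑ k, A i k * (Function.update x j v k : ℝ)
      = ∑ k, A i k * (x k : ℝ) + A i j * ((v : ℝ) - x j) := by
  have hupd : ∀ w : ℕ, (fun k => A i k * (Function.update x j w k : ℝ))
      = Function.update (fun k => A i k * (x k : ℝ)) j (A i j * w) := by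
    intro w; ext k
    by_cases hk : k = j
    · subst hk; simp
    · simp [hk]
  have hv := Finset.sum_update_of_mem (mem_univ j) (fun k => A i k * (x k : ℝ)) (A i j * v)
  have hx := Finset.sum_update_of_mem (mem_univ j) (fun k => A i k * (x k : ℝ)) (A i j * x j)
  rw [← hupd] at hv hx
  simp only [Function.update_eq_self] at hx
  rw [hv, hx]
  ring

instance : Std.Symm (SGAdj d A b) :=
  ⟨fun _ _ h => ⟨h.2.1, h.1, by rw [hammingDist_comm]; exact h.2.2⟩⟩

lemma reflTransGen_update_of_forall_mem_uIcc (x : Fin n → ℕ) (j : Fin n) {u w : ℕ}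
    (h : ∀ v ∈ uIcc u w, Feas d A b (Function.update x j v)) :
    Relation.ReflTransGen (SGAdj d A b) (Function.update x j u) (Function.update x j w) := by
  wlog huw : u ≤ w generalizing u w
  · exact symm (this (by rwa [uIcc_comm]) (by omega))
  induction w, huw using Nat.le_induction with
  | base => rfl
  | succ w huw ih =>
    refine (ih fun v hv => h v ?_).tail
      ⟨h w ?_, h (w + 1) ?_, hammingDist_update_update x j (by omega)⟩ <;>
    simp_all [mem_uIcc]; omega

lemma feas_update_of_mem_uIcc {S : Finset (Fin n)} {j : Fin n} {x z : Fin n → ℕ}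
    (hx : Feas d A b x) (hz : Feas d A b z) (hxz : ∀ k ∉ S, x k = z k)
    {v : ℕ} (hv : v ∈ uIcc (x j) (z j))
    (hrow : ∀ i, A i j * ((v : ℝ) - x j) < 0 → ∀ k ∈ S, k ≠ j → A i k = 0) :
    Feas d A b (Function.update x j v) := by
  refine ⟨fun k => ?_, fun i => ?_⟩
  · rcases eq_or_ne k j with rfl | hk
    · simpa using (mem_uIcc.mp hv).2.trans (max_le (hx.1 k) (hz.1 k))
    · simpa [hk] using hx.1 k
  by_cases hi : 0 ≤ A i j * ((v : ℝ) - x j)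
  · rw [sum_mul_update]
    linarith [hx.2 i]
  -- row `i` sees no column of `S` but `j`, so it cannot tell `x` and `z` apart
  have hsame : ∑ k, A i k * (Function.update x j v k : ℝ)
      = ∑ k, A i k * (Function.update z j v k : ℝ) := by
    refine sum_congr rfl fun k _ => ?_
    rcases eq_or_ne k j with rfl | hk
    · simp
    by_cases hkS : k ∈ S
    · simp [hrow i (not_le.mp hi) k hkS hk]
    · simp [hk, hxz k hkS]
  have hbetween : ((v : ℝ) - x j) * ((v : ℝ) - z j) ≤ 0 := by
    rcases mem_uIcc'.mp hv with ⟨h₁, h₂⟩ | ⟨h₁, h₂⟩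
    · exact mul_nonpos_of_nonneg_of_nonpos (sub_nonneg.mpr (by exact_mod_cast h₁))
        (sub_nonpos.mpr (by exact_mod_cast h₂))
    · exact mul_nonpos_of_nonpos_of_nonneg (sub_nonpos.mpr (by exact_mod_cast h₂))
        (sub_nonneg.mpr (by exact_mod_cast h₁))
  have hz_side : 0 ≤ A i j * ((v : ℝ) - z j) := by
    nlinarith [sq_nonneg (A i j)]
  rw [hsame, sum_mul_update]
  linarith [hz.2 i]

lemma feas_update_of_pos_rows_vanish {S : Finset (Fin n)} {j : Fin n}
    (hpos : ∀ i, 0 < A i j → ∀ k ∈ S, k ≠ j → A i k = 0) {x z : Fin n → ℕ}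
    (hx : Feas d A b x) (hz : Feas d A b z) (hxz : ∀ k ∉ S, x k = z k) (hzx : z j ≤ x j)
    {v : ℕ} (hv : v ∈ uIcc (x j) (z j)) : Feas d A b (Function.update x j v) := by
  have hvx : v ≤ x j := by simpa [hzx] using (mem_uIcc.mp hv).2
  exact feas_update_of_mem_uIcc hx hz hxz hv fun i hi =>
    hpos i (pos_of_mul_neg_left hi (sub_nonpos.mpr (by exact_mod_cast hvx)))

lemma feas_update_of_neg_rows_vanish {S : Finset (Fin n)} {j : Fin n}
    (hneg : ∀ i, A i j < 0 → ∀ k ∈ S, k ≠ j → A i k = 0) {x z : Fin n → ℕ}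
    (hx : Feas d A b x) (hz : Feas d A b z) (hxz : ∀ k ∉ S, x k = z k) (hxz' : x j ≤ z j)
    {v : ℕ} (hv : v ∈ uIcc (x j) (z j)) : Feas d A b (Function.update x j v) := by
  have hxv : x j ≤ v := by simpa [hxz'] using (mem_uIcc.mp hv).1
  exact feas_update_of_mem_uIcc hx hz hxz hv fun i hi =>
    hneg i (neg_of_mul_neg_left hi (sub_nonneg.mpr (by exact_mod_cast hxv)))

lemma CanElim.exists_common_value {S : Finset (Fin n)} {j : Fin n} (hC : CanElim A S j)
    {x y : Fin n → ℕ} (hx : Feas d A b x) (hy : Feas d A b y) (hxy : ∀ k ∉ S, x k = y k) :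
    ∃ w, (∀ v ∈ uIcc (x j) w, Feas d A b (Function.update x j v)) ∧
      ∀ v ∈ uIcc (y j) w, Feas d A b (Function.update y j v) := by
  wlog hle : x j ≤ y j generalizing x y
  · obtain ⟨w, hxw, hyw⟩ := this hy hx (fun k hk => (hxy k hk).symm) (by omega)
    exact ⟨w, hyw, hxw⟩
  have hyx : ∀ k ∉ S, y k = x k := fun k hk => (hxy k hk).symm
  rcases hC with hpos | hneg
  · exact ⟨x j, fun v => feas_update_of_pos_rows_vanish hpos hx hx (fun _ _ => rfl) le_rfl,
      fun v => feas_update_of_pos_rows_vanish hpos hy hx hyx hle⟩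
  · exact ⟨y j, fun v => feas_update_of_neg_rows_vanish hneg hx hy hxy hle,
      fun v => feas_update_of_neg_rows_vanish hneg hy hy (fun _ _ => rfl) le_rfl⟩

end SolutionGraph

inductive Eliminable {m n : ℕ} (A : Matrix (Fin m) (Fin n) ℝ) : Finset (Fin n) → Prop
  | empty : Eliminable A ∅
  | step {S : Finset (Fin n)} {j : Fin n} :
      CanElim A S j → Eliminable A (S.erase j) → Eliminable A S

namespace Eliminable

open SolutionGraph

variable {m n : ℕ} {A : Matrix (Fin m) (Fin n) ℝ}

theorem reflTransGen {d : ℕ} {b : Fin m → ℝ} {S : Finset (Fin n)} (hS : Eliminable A S)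
    {x y : Fin n → ℕ} (hx : Feas d A b x) (hy : Feas d A b y) (hxy : ∀ k ∉ S, x k = y k) :
    Relation.ReflTransGen (SGAdj d A b) x y := by
  induction hS generalizing x y with
  | empty => exact (funext fun k => hxy k (notMem_empty k)) ▸ .refl
  | @step S j hC _ ih =>
    obtain ⟨w, hxw, hyw⟩ := hC.exists_common_value hx hy hxy
    have hxy' : ∀ k ∉ S.erase j, Function.update x j w k = Function.update y j w k := by
      intro k hk
      rcases eq_or_ne k j with rfl | hkj
      · simp
      · simpa [hkj] using hxy k (by simpa [hkj] using hk)
    have hx' := reflTransGen_update_of_forall_mem_uIcc x j hxw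
    have hy' := reflTransGen_update_of_forall_mem_uIcc y j hyw
    rw [Function.update_eq_self] at hx' hy'
    exact hx'.trans ((ih (hxw w right_mem_uIcc) (hyw w right_mem_uIcc) hxy').trans (symm hy'))

end Eliminable

theorem HasEO.eliminable {m n : ℕ} {A : Matrix (Fin m) (Fin n) ℝ} (h : HasEO A) :
    Eliminable A univ := by
  obtain ⟨e, he⟩ := h
  let T : ℕ → Finset (Fin n) := fun k => univ.filter fun c => ∀ s : Fin n, (s : ℕ) < k → e s ≠ c
  have hT : ∀ k ≤ n, Eliminable A (T k) := by
    intro k hk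
    induction hk using Nat.decreasingInduction with
    | self =>
      convert Eliminable.empty
      ext c
      simp only [T, mem_filter, mem_univ, true_and, notMem_empty, iff_false, not_forall]
      exact ⟨e.symm c, (e.symm c).isLt, by simp⟩
    | of_succ k hk ih =>
      refine .step (he ⟨k, hk⟩) ?_
      convert ih using 1
      ext c
      simp only [T, mem_erase, mem_filter, mem_univ, true_and]
      constructor
      · rintro ⟨hck, hc⟩ s hs
        rcases Nat.lt_succ_iff_lt_or_eq.mp hs with hs | hs
        · exact hc s hs
        · obtain rfl : s = ⟨k, hk⟩ := Fin.ext hs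
          exact hck.symm
      · intro hc
        exact ⟨fun hce => hc ⟨k, hk⟩ k.lt_succ_self hce.symm, fun s hs => hc s (by omega)⟩
  simpa [T] using hT 0 n.zero_le

theorem stmt17_general {m n : ℕ} (d : ℕ) (A : Matrix (Fin m) (Fin n) ℝ)
    (h : HasEO A) : UnivConn d A :=
  fun _ _ _ hx hy => h.eliminable.reflTransGen hx hy fun k hk => absurd (mem_univ k) hk

theorem stmt17 {m n : ℕ} (d : ℕ) (hd : 1 ≤ d) (A : Matrix (Fin m) (Fin n) ℝ)
    (h : HasEO A) : UnivConn d A :=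
  stmt17_general d A h
end

section
/- Let A ∈ ℝ^{2×2} with all four entries nonzero and a_{11}·a_{21} < 0, a_{12}·a_{22} < 0 (a forbidden pattern of size 2). Fix d ≥ 1, D = {0,…,d}. Then A is not universally connected: there exists b ∈ ℝ^2 such that the graph on {x ∈ D^2 : Ax ≥ b} with edges at Hamming distance 1 is disconnected. -/
open Matrix Finset
open scoped Classical

/-!
Negating the columns `j ∈ S` of `A` and substituting `x j ↦ d - x j` there is an isomorphism of
solution graphs (after shifting `b`), so we may flip the columns where the first row is negative
and assume that the first row of `A` is positive and the second negative. Pick columns `j ≠ k`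
with `A 1 j ≤ A 1 k` and put `b = (min (A 0 j) (A 0 k), A 1 j)`. The first inequality excludes
only `0`; since the second row is negative, the second inequality forces every feasible `x`
with `x j ≠ 0` to be the unit vector `e j`. Every neighbour of `e j` either has `j`-th
coordinate `0`, hence is `0`, or equals `e j`; so `e j` is isolated, while `e k` is feasible too.
-/

lemma eq_of_hammingDist_eq_one {ι β : Type*} [Fintype ι] [DecidableEq β] {x y : ι → β}
    (h : hammingDist x y = 1) {j : ι} (hj : x j ≠ y j) {i : ι} (hi : i ≠ j) : x i = y i := by
  by_contra hxy
  have hcard : (univ.filter fun k => x k ≠ y k).card ≤ 1 := (show hammingDist x y ≤ 1 by omega)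
  exact hi (Finset.card_le_one.1 hcard i (by simpa using hxy) j (by simpa using hj))

lemma not_sgConn_of_isolated {m n d : ℕ} {A : Matrix (Fin m) (Fin n) ℝ} {b : Fin m → ℝ}
    {p q : Fin n → ℕ} (hp : Feas d A b p) (hq : Feas d A b q) (hpq : p ≠ q)
    (hiso : ∀ z, ¬ SGAdj d A b p z) : ¬ SGConn d A b := fun h =>
  (h p q hp hq).cases_head.elim hpq fun ⟨z, hz, _⟩ => hiso z hz

section Flip

variable {m n : ℕ} (d : ℕ) (S : Finset (Fin n))

def flipCoords (x : Fin n → ℕ) : Fin n → ℕ := fun j => if j ∈ S then d - x j else x j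

def flipCols (A : Matrix (Fin m) (Fin n) ℝ) : Matrix (Fin m) (Fin n) ℝ :=
  Matrix.of fun i j => if j ∈ S then -A i j else A i j

variable {d S}

lemma flipCoords_le {x : Fin n → ℕ} (hx : ∀ j, x j ≤ d) (j : Fin n) :
    flipCoords d S x j ≤ d := by
  have := hx j; unfold flipCoords; split_ifs <;> omega

lemma flipCoords_flipCoords {x : Fin n → ℕ} (hx : ∀ j, x j ≤ d) :
    flipCoords d S (flipCoords d S x) = x := by
  funext j; have := hx j; unfold flipCoords; split_ifs <;> omega

lemma hammingDist_flipCoords {x y : Fin n → ℕ} (hx : ∀ j, x j ≤ d) (hy : ∀ j, y j ≤ d) :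
    hammingDist (flipCoords d S x) (flipCoords d S y) = hammingDist x y := by
  unfold hammingDist flipCoords
  congr 1
  refine Finset.filter_congr fun j _ => ?_
  have := hx j; have := hy j
  split_ifs
  · rw [ne_eq, ne_eq, not_iff_not]
    constructor <;> intro h <;> dsimp only at h ⊢ <;> omega
  · rfl

lemma sum_mul_flipCoords (A : Matrix (Fin m) (Fin n) ℝ) {x : Fin n → ℕ} (hx : ∀ j, x j ≤ d)
    (i : Fin m) :
    ∑ j, A i j * (flipCoords d S x j : ℝ) =
      ∑ j, flipCols S A i j * (x j : ℝ) + ∑ j ∈ S, A i j * d := by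
  have hterm : ∀ j, A i j * (flipCoords d S x j : ℝ) =
      flipCols S A i j * (x j : ℝ) + if j ∈ S then A i j * d else 0 := by
    intro j
    by_cases hj : j ∈ S
    · simp only [flipCoords, flipCols, Matrix.of_apply, if_pos hj, Nat.cast_sub (hx j)]
      ring
    · simp [flipCoords, flipCols, hj]
  simp only [hterm, Finset.sum_add_distrib, Finset.sum_ite_mem, Finset.univ_inter]

lemma feas_flipCoords_iff {A : Matrix (Fin m) (Fin n) ℝ} {b : Fin m → ℝ} {x : Fin n → ℕ}
    (hx : ∀ j, x j ≤ d) :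
    Feas d A (fun i => b i + ∑ j ∈ S, A i j * d) (flipCoords d S x) ↔
      Feas d (flipCols S A) b x := by
  simp only [Feas, sum_mul_flipCoords A hx, add_le_add_iff_right]
  exact ⟨fun h => ⟨hx, h.2⟩, fun h => ⟨flipCoords_le hx, h.2⟩⟩

theorem sgConn_flipCols {A : Matrix (Fin m) (Fin n) ℝ} {b : Fin m → ℝ}
    (h : SGConn d A (fun i => b i + ∑ j ∈ S, A i j * d)) : SGConn d (flipCols S A) b := by
  intro x y hx hy
  have hfeas : ∀ u, Feas d A (fun i => b i + ∑ j ∈ S, A i j * d) u →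
      Feas d (flipCols S A) b (flipCoords d S u) := fun u hu =>
    (feas_flipCoords_iff (flipCoords_le hu.1)).1 (by rwa [flipCoords_flipCoords hu.1])
  have hadj : ∀ u v, SGAdj d A (fun i => b i + ∑ j ∈ S, A i j * d) u v →
      SGAdj d (flipCols S A) b (flipCoords d S u) (flipCoords d S v) := fun u v ⟨hu, hv, huv⟩ =>
    ⟨hfeas u hu, hfeas v hv, (hammingDist_flipCoords hu.1 hv.1).trans huv⟩
  have hpath := (h _ _ ((feas_flipCoords_iff hx.1).2 hx) ((feas_flipCoords_iff hy.1).2 hy)).lift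
    _ hadj
  rwa [Function.onFun, flipCoords_flipCoords hx.1, flipCoords_flipCoords hy.1] at hpath

end Flip

lemma flipCols_sign {m n : ℕ} {A : Matrix (Fin m) (Fin n) ℝ} {i₀ i : Fin m}
    (h : ∀ j, A i₀ j * A i j < 0) (j : Fin n) :
    0 < flipCols (univ.filter fun j => A i₀ j < 0) A i₀ j ∧
      flipCols (univ.filter fun j => A i₀ j < 0) A i j < 0 := by
  rcases mul_neg_iff.1 (h j) with ⟨hpos, hneg⟩ | ⟨hneg, hpos⟩
  · simp [flipCols, hpos.not_gt, hpos, hneg]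
  · simp [flipCols, hneg, hpos]

lemma feas_single_iff {m n d : ℕ} {A : Matrix (Fin m) (Fin n) ℝ} {b : Fin m → ℝ} (hd : 1 ≤ d)
    (j : Fin n) : Feas d A b (Pi.single j 1) ↔ ∀ i, b i ≤ A i j := by
  have hbound : ∀ k, (Pi.single j 1 : Fin n → ℕ) k ≤ d := fun k => by
    rcases eq_or_ne k j with rfl | hkj <;> simp [*]
  simp only [Feas, hbound, implies_true, true_and]
  simp [Pi.single_apply]

section PosNeg

variable {n d : ℕ} {A : Matrix (Fin 2) (Fin n) ℝ} {b : Fin 2 → ℝ}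

lemma eq_single_of_feas (hneg : ∀ j, A 1 j < 0) {j : Fin n} (hb : A 1 j ≤ b 1)
    {z : Fin n → ℕ} (hz : Feas d A b z) (hzj : z j ≠ 0) : z = Pi.single j 1 := by
  have hle : ∀ t : Finset (Fin n), A 1 j ≤ ∑ i ∈ t, A 1 i * z i := fun t =>
    hb.trans <| (hz.2 1).trans <| sum_le_sum_of_subset_of_nonpos' (subset_univ t)
      fun i _ _ => mul_nonpos_of_nonpos_of_nonneg (hneg i).le (Nat.cast_nonneg _)
  have hzj1 : z j = 1 := by
    have hj := hle {j}
    have hge : (1 : ℝ) ≤ z j := by exact_mod_cast Nat.one_le_iff_ne_zero.2 hzj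
    simp only [sum_singleton] at hj
    have hle' : (z j : ℝ) ≤ 1 := by nlinarith [hneg j]
    exact_mod_cast le_antisymm hle' hge
  funext k
  rcases eq_or_ne k j with rfl | hkj
  · simp [hzj1]
  · have hjk := hle {j, k}
    rw [sum_pair hkj.symm, hzj1, Nat.cast_one, mul_one, le_add_iff_nonneg_right] at hjk
    have : (z k : ℝ) ≤ 0 := by nlinarith [hneg k]
    simp only [Pi.single_apply, hkj, if_false]
    exact_mod_cast this.antisymm (Nat.cast_nonneg _)

lemma not_sgAdj_single (hneg : ∀ j, A 1 j < 0) (hb₀ : 0 < b 0) {j : Fin n} (hb₁ : A 1 j ≤ b 1)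
    (z : Fin n → ℕ) : ¬ SGAdj d A b (Pi.single j 1) z := by
  rintro ⟨-, hz, hdist⟩
  by_cases hzj : z j = 0
  · have hz0 : z = 0 := funext fun i => by
      rcases eq_or_ne i j with rfl | hij
      · exact hzj
      · simpa [hij] using (eq_of_hammingDist_eq_one hdist (by simp [hzj]) hij).symm
    have h0 : b 0 ≤ 0 := by simpa [hz0] using hz.2 0
    linarith
  · rw [eq_single_of_feas hneg hb₁ hz hzj, hammingDist_self] at hdist
    exact zero_ne_one hdist

theorem not_sgConn_of_pos_neg (hd : 1 ≤ d) (hpos : ∀ j, 0 < A 0 j) (hneg : ∀ j, A 1 j < 0)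
    {j k : Fin n} (hjk : j ≠ k) (hle : A 1 j ≤ A 1 k) :
    ¬ SGConn d A ![min (A 0 j) (A 0 k), A 1 j] :=
  not_sgConn_of_isolated (p := Pi.single j 1) (q := Pi.single k 1)
    ((feas_single_iff hd j).2 <| Fin.forall_fin_two.2 ⟨by simp, by simp⟩)
    ((feas_single_iff hd k).2 <| Fin.forall_fin_two.2 ⟨by simp, by simpa using hle⟩)
    (fun h => by simpa [hjk] using congrFun h j)
    (not_sgAdj_single hneg (by simpa using ⟨hpos j, hpos k⟩) (by simp))

theorem exists_not_sgConn_of_pos_neg (hd : 1 ≤ d) (hpos : ∀ j, 0 < A 0 j)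
    (hneg : ∀ j, A 1 j < 0) {j k : Fin n} (hjk : j ≠ k) : ∃ b, ¬ SGConn d A b := by
  rcases le_total (A 1 j) (A 1 k) with hle | hle
  · exact ⟨_, not_sgConn_of_pos_neg hd hpos hneg hjk hle⟩
  · exact ⟨_, not_sgConn_of_pos_neg hd hpos hneg hjk.symm hle⟩

end PosNeg

theorem stmt18_general (d : ℕ) (hd : 1 ≤ d) (A : Matrix (Fin 2) (Fin 2) ℝ)
    (h1 : A 0 0 * A 1 0 < 0) (h2 : A 0 1 * A 1 1 < 0) :
    ∃ b : Fin 2 → ℝ, ¬ SGConn d A b := by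
  have hcol : ∀ j, A 0 j * A 1 j < 0 := Fin.forall_fin_two.2 ⟨h1, h2⟩
  obtain ⟨b, hb⟩ := exists_not_sgConn_of_pos_neg hd (fun j => (flipCols_sign hcol j).1)
    (fun j => (flipCols_sign hcol j).2) (zero_ne_one : (0 : Fin 2) ≠ 1)
  exact ⟨_, fun h => hb (sgConn_flipCols h)⟩

theorem stmt18 (d : ℕ) (hd : 1 ≤ d) (A : Matrix (Fin 2) (Fin 2) ℝ)
    (h0 : ∀ i j : Fin 2, A i j ≠ 0)
    (h1 : A 0 0 * A 1 0 < 0) (h2 : A 0 1 * A 1 1 < 0) :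
    ∃ b : Fin 2 → ℝ, ¬ SGConn d A b :=
  stmt18_general d hd A h1 h2
end
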